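/- arXiv:1701.08032 — 7 statements merged into one kernel-verified Lean document; each statement's English description precedes it below -/
import Mathlib

section
/- In the network setup, the set of end-state tuples (ℓ_h⁻, ℓ_h⁺)_{h∈H} with 0 ≤ ℓ_h⁻ < ℓ_h⁺ ≤ 1 satisfying f_h(ℓ_h⁺) = f_h(ℓ_h⁻) for every h ∈ H and f_j(ℓ_j⁻) = Σ_{i∈I} α_{i,j} f_i(ℓ_i⁻) for every j ∈ J is infinite. Moreover, the stationary traveling waves of the network problem at profile level are exactly characterized by these conditions: for every such tuple, the associated profiles (all with speed c_h = 0) form a traveling wave at profile level; conversely, the end states of any stationary traveling wave at profile level satisfy these conditions. -/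
/-!
A wave is stationary iff `f_h(ℓ_h⁺) = f_h(ℓ_h⁻)` on every road, and then all speeds vanish, the
reduced fluxes are the fluxes, and the coupling condition collapses to the flux balance
`f_j(ℓ_j⁻) = ∑ᵢ α_{i,j} f_i(ℓ_i⁻)`. By strict concavity `f > f(ℓ⁻)` on `(ℓ⁻, ℓ⁺)`, so the profile
equation `φ' = (f(φ) - f(ℓ⁻)) / D(φ)` is solved by inverting a primitive of `D / (f - f(ℓ⁻))`,
extended by the end states outside its range. For infinitely many admissible end states, prescribe
a small level `c` for `f_i(ℓ_i⁻)` on every incoming road and `c ∑ᵢ α_{i,j}` for `f_j(ℓ_j⁻)`: every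
level in `(0, f_h(1/2))` is attained by `f_h` both left and right of `1/2`.
-/

open Set Filter MeasureTheory
open scoped Topology Classical

/-- Assumption (f): `f ∈ C¹([0,1];ℝ)` is nonnegative, strictly concave, `f 0 = f 1 = 0`. -/
def FluxAssumption (f : ℝ → ℝ) : Prop :=
  ContDiffOn ℝ 1 f (Icc 0 1) ∧ StrictConcaveOn ℝ (Icc 0 1) f ∧
  (∀ x ∈ Icc (0:ℝ) 1, 0 ≤ f x) ∧ f 0 = 0 ∧ f 1 = 0

/-- Assumption (D): `D ∈ C¹([0,1];ℝ)` is nonnegative and positive on `(0,1)`. -/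
def DiffAssumption (D : ℝ → ℝ) : Prop :=
  ContDiffOn ℝ 1 D (Icc 0 1) ∧ (∀ x ∈ Icc (0:ℝ) 1, 0 ≤ D x) ∧
  (∀ x ∈ Ioo (0:ℝ) 1, 0 < D x)

/-- The wave speed `c = (f(ℓ⁺) - f(ℓ⁻))/(ℓ⁺ - ℓ⁻)`. -/
noncomputable def waveSpeed (f : ℝ → ℝ) (a b : ℝ) : ℝ := (f b - f a) / (b - a)

/-- The reduced flux `g(ρ) = f(ρ) - c ρ`. -/
noncomputable def redFlux (f : ℝ → ℝ) (a b ρ : ℝ) : ℝ := f ρ - waveSpeed f a b * ρ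

/-- A profile for data `f, D, ℓ⁻ = a, ℓ⁺ = b`: continuous, non-decreasing, with values in
`[a,b]`, limits `a` at `-∞` and `b` at `+∞`, `C²` on `I = {ξ | a < φ ξ < b}` with positive
derivative there, satisfying `D(φ) φ' = g(φ) - g(a)` on `I`. -/
def IsProfile (f D : ℝ → ℝ) (a b : ℝ) (φ : ℝ → ℝ) : Prop :=
  Continuous φ ∧ Monotone φ ∧ (∀ ξ, φ ξ ∈ Icc a b) ∧
  Tendsto φ atBot (𝓝 a) ∧ Tendsto φ atTop (𝓝 b) ∧
  ContDiffOn ℝ 2 φ {ξ | a < φ ξ ∧ φ ξ < b} ∧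
  ∀ ξ, a < φ ξ → φ ξ < b →
    0 < deriv φ ξ ∧ D (φ ξ) * deriv φ ξ = redFlux f a b (φ ξ) - redFlux f a b a

/-- Speed of road `h` given end–state functions. -/
noncomputable def spd {H : Type*} (f : H → ℝ → ℝ) (lm lp : H → ℝ) (h : H) : ℝ :=
  waveSpeed (f h) (lm h) (lp h)

/-- Reduced flux of road `h` given end–state functions. -/
noncomputable def gred {H : Type*} (f : H → ℝ → ℝ) (lm lp : H → ℝ) (h : H) (ρ : ℝ) : ℝ :=
  redFlux (f h) (lm h) (lp h) ρ

/-- The network setup: flux/diffusivity assumptions on each road, and coefficients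
`α i j ∈ (0,1]` with unit row sums. -/
def NetworkSetup {m n : ℕ} (f D : Fin m ⊕ Fin n → ℝ → ℝ) (α : Fin m → Fin n → ℝ) : Prop :=
  (∀ h, FluxAssumption (f h)) ∧ (∀ h, DiffAssumption (D h)) ∧
  (∀ i j, α i j ∈ Ioc (0:ℝ) 1) ∧ (∀ i, ∑ j, α i j = 1)

/-- Admissible end states: `0 ≤ ℓ_h⁻ < ℓ_h⁺ ≤ 1` for every road. -/
def EndStates {H : Type*} (lm lp : H → ℝ) : Prop :=
  ∀ h, 0 ≤ lm h ∧ lm h < lp h ∧ lp h ≤ 1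

/-- The coupling condition (Tool):
`c_j φ_j(c_j t) + g_j(ℓ_j⁻) = ∑_i α_{i,j} (c_i φ_i(c_i t) + g_i(ℓ_i⁻))` for all `t, j`. -/
def Tool {m n : ℕ} (f : Fin m ⊕ Fin n → ℝ → ℝ) (α : Fin m → Fin n → ℝ)
    (lm lp : Fin m ⊕ Fin n → ℝ) (φ : Fin m ⊕ Fin n → ℝ → ℝ) : Prop :=
  ∀ t : ℝ, ∀ j : Fin n,
    spd f lm lp (Sum.inr j) * φ (Sum.inr j) (spd f lm lp (Sum.inr j) * t)
      + gred f lm lp (Sum.inr j) (lm (Sum.inr j))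
    = ∑ i : Fin m, α i j *
        (spd f lm lp (Sum.inl i) * φ (Sum.inl i) (spd f lm lp (Sum.inl i) * t)
          + gred f lm lp (Sum.inl i) (lm (Sum.inl i)))

/-- A traveling wave of the network problem at profile level: a family of profiles
satisfying the coupling condition (Tool). -/
def IsTravelingWave {m n : ℕ} (f D : Fin m ⊕ Fin n → ℝ → ℝ) (α : Fin m → Fin n → ℝ)
    (lm lp : Fin m ⊕ Fin n → ℝ) (φ : Fin m ⊕ Fin n → ℝ → ℝ) : Prop :=
  (∀ h, IsProfile (f h) (D h) (lm h) (lp h) (φ h)) ∧ Tool f α lm lp φ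

/-- `L_{i,j}⁻`: `ℓ_i⁻` if `c_i c_j ≥ 0`, and `ℓ_i⁺` otherwise. -/
noncomputable def Lminus {m n : ℕ} (f : Fin m ⊕ Fin n → ℝ → ℝ)
    (lm lp : Fin m ⊕ Fin n → ℝ) (i : Fin m) (j : Fin n) : ℝ :=
  if 0 ≤ spd f lm lp (Sum.inl i) * spd f lm lp (Sum.inr j) then lm (Sum.inl i)
  else lp (Sum.inl i)

/-- `L_{i,j}⁺`: `ℓ_i⁺` if `c_i c_j ≥ 0`, and `ℓ_i⁻` otherwise. -/
noncomputable def Lplus {m n : ℕ} (f : Fin m ⊕ Fin n → ℝ → ℝ)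
    (lm lp : Fin m ⊕ Fin n → ℝ) (i : Fin m) (j : Fin n) : ℝ :=
  if 0 ≤ spd f lm lp (Sum.inl i) * spd f lm lp (Sum.inr j) then lp (Sum.inl i)
  else lm (Sum.inl i)

/-- `k_j = ∑_{i ∈ I₀ᶜ} A_{i,j} L_{i,j}⁻ - ℓ_j⁻` with `A_{i,j} = α_{i,j} c_i / c_j`. -/
noncomputable def kconst {m n : ℕ} (f : Fin m ⊕ Fin n → ℝ → ℝ) (α : Fin m → Fin n → ℝ)
    (lm lp : Fin m ⊕ Fin n → ℝ) (j : Fin n) : ℝ :=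
  (∑ i ∈ Finset.univ.filter (fun i : Fin m => spd f lm lp (Sum.inl i) ≠ 0),
      (α i j * (spd f lm lp (Sum.inl i) / spd f lm lp (Sum.inr j))) * Lminus f lm lp i j)
    - lm (Sum.inr j)


theorem Monotone.continuous_of_Ioo_subset_range {φ : ℝ → ℝ} {a b : ℝ} (hφ : Monotone φ)
    (hab : a < b) (hIcc : ∀ ξ, φ ξ ∈ Icc a b) (hrange : Ioo a b ⊆ range φ) : Continuous φ := by
  have hmono : Monotone (codRestrict φ (Icc a b) hIcc) := fun _ _ h => hφ h
  let a' : Icc a b := ⟨a, left_mem_Icc.2 hab.le⟩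
  let b' : Icc a b := ⟨b, right_mem_Icc.2 hab.le⟩
  have hdense : Dense (Ioo a' b') := by
    rw [dense_iff_closure_eq, closure_Ioo (Subtype.coe_ne_coe.1 hab.ne)]
    exact eq_univ_of_forall fun x => x.2
  refine continuous_subtype_val.comp (hmono.continuous_of_denseRange (hdense.mono ?_))
  intro x hx
  obtain ⟨ξ, hξ⟩ := hrange hx
  exact ⟨ξ, Subtype.ext hξ⟩

/-- The inverse of `Ξ` on `Ioo a b`, extended by `a` to the left and by `b` to the right of
`Ξ '' Ioo a b`. -/
noncomputable def clampedInv (Ξ : ℝ → ℝ) (a b ξ : ℝ) : ℝ :=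
  sSup (insert a {x | x ∈ Ioo a b ∧ Ξ x ≤ ξ})

section clampedInv

variable {Ξ : ℝ → ℝ} {a b : ℝ}

theorem bddAbove_clampedInv_set (hab : a ≤ b) (ξ : ℝ) :
    BddAbove (insert a {x | x ∈ Ioo a b ∧ Ξ x ≤ ξ}) :=
  ⟨b, by rintro x (rfl | hx); exacts [hab, hx.1.2.le]⟩

theorem clampedInv_mem_Icc (hab : a ≤ b) (ξ : ℝ) : clampedInv Ξ a b ξ ∈ Icc a b :=
  ⟨le_csSup (bddAbove_clampedInv_set hab ξ) (mem_insert _ _),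
    csSup_le (insert_nonempty _ _) (by rintro x (rfl | hx); exacts [hab, hx.1.2.le])⟩

theorem monotone_clampedInv (hab : a ≤ b) : Monotone (clampedInv Ξ a b) := fun _ η h =>
  csSup_le_csSup (bddAbove_clampedInv_set hab η) (insert_nonempty _ _)
    (insert_subset_insert fun _ hx => ⟨hx.1, hx.2.trans h⟩)

theorem clampedInv_apply (hΞ : StrictMonoOn Ξ (Ioo a b)) {x : ℝ} (hx : x ∈ Ioo a b) :
    clampedInv Ξ a b (Ξ x) = x := by
  refine le_antisymm (csSup_le (insert_nonempty _ _) ?_)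
    (le_csSup (bddAbove_clampedInv_set (hx.1.trans hx.2).le _) (Or.inr ⟨hx, le_rfl⟩))
  rintro y (rfl | hy)
  exacts [hx.1.le, (hΞ.le_iff_le hy.1 hx).1 hy.2]

theorem Ioo_subset_range_clampedInv (hΞ : StrictMonoOn Ξ (Ioo a b)) :
    Ioo a b ⊆ range (clampedInv Ξ a b) := fun x hx => ⟨Ξ x, clampedInv_apply hΞ hx⟩

theorem continuous_clampedInv (hab : a < b) (hΞ : StrictMonoOn Ξ (Ioo a b)) :
    Continuous (clampedInv Ξ a b) :=
  (monotone_clampedInv hab.le).continuous_of_Ioo_subset_range hab (clampedInv_mem_Icc hab.le)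
    (Ioo_subset_range_clampedInv hΞ)

theorem tendsto_clampedInv_atBot (hab : a < b) (hΞ : StrictMonoOn Ξ (Ioo a b)) :
    Tendsto (clampedInv Ξ a b) atBot (𝓝 a) :=
  tendsto_atBot_isGLB (monotone_clampedInv hab.le) <|
    (isGLB_Ioo hab).of_subset_of_superset (isGLB_Icc hab.le) (Ioo_subset_range_clampedInv hΞ)
      (range_subset_iff.2 (clampedInv_mem_Icc hab.le))

theorem tendsto_clampedInv_atTop (hab : a < b) (hΞ : StrictMonoOn Ξ (Ioo a b)) :
    Tendsto (clampedInv Ξ a b) atTop (𝓝 b) :=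
  tendsto_atTop_isLUB (monotone_clampedInv hab.le) <|
    (isLUB_Ioo hab).of_subset_of_superset (isLUB_Icc hab.le) (Ioo_subset_range_clampedInv hΞ)
      (range_subset_iff.2 (clampedInv_mem_Icc hab.le))

theorem clampedInv_eq_or_eq_of_notMem_image (hΞc : ContinuousOn Ξ (Ioo a b)) {ξ : ℝ}
    (hξ : ξ ∉ Ξ '' Ioo a b) : clampedInv Ξ a b ξ = a ∨ clampedInv Ξ a b ξ = b := by
  by_cases hex : ∃ y ∈ Ioo a b, Ξ y ≤ ξ
  · obtain ⟨y₀, hy₀, hy₀ξ⟩ := hex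
    -- the image of `Ξ` is an interval, so it lies entirely below `ξ`
    have hall : ∀ y ∈ Ioo a b, Ξ y ≤ ξ := fun y hy => not_lt.1 fun hlt =>
      hξ ((isPreconnected_Ioo.image Ξ hΞc).Icc_subset (mem_image_of_mem Ξ hy₀)
        (mem_image_of_mem Ξ hy) ⟨hy₀ξ, hlt.le⟩)
    have hset : {x | x ∈ Ioo a b ∧ Ξ x ≤ ξ} = Ioo a b :=
      Set.ext fun y => ⟨And.left, fun hy => ⟨hy, hall y hy⟩⟩
    right
    rw [clampedInv, hset, Ioo_insert_left (hy₀.1.trans hy₀.2), csSup_Ico (hy₀.1.trans hy₀.2)]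
  · have hset : {x | x ∈ Ioo a b ∧ Ξ x ≤ ξ} = ∅ :=
      eq_empty_of_forall_notMem fun x hx => hex ⟨x, hx⟩
    left
    rw [clampedInv, hset, insert_empty_eq, csSup_singleton]

theorem apply_clampedInv (hΞ : StrictMonoOn Ξ (Ioo a b)) (hΞc : ContinuousOn Ξ (Ioo a b))
    {ξ : ℝ} (hξ : clampedInv Ξ a b ξ ∈ Ioo a b) : Ξ (clampedInv Ξ a b ξ) = ξ := by
  by_cases hmem : ξ ∈ Ξ '' Ioo a b
  · obtain ⟨x, hx, rfl⟩ := hmem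
    rw [clampedInv_apply hΞ hx]
  · rcases clampedInv_eq_or_eq_of_notMem_image hΞc hmem with h | h <;> rw [h] at hξ
    exacts [(lt_irrefl a hξ.1).elim, (lt_irrefl b hξ.2).elim]

theorem hasDerivAt_clampedInv {G : ℝ → ℝ} (hab : a < b) (hΞ : StrictMonoOn Ξ (Ioo a b))
    (hΞ' : ∀ x ∈ Ioo a b, HasDerivAt Ξ (G x)⁻¹ x) (hG : ∀ x ∈ Ioo a b, G x ≠ 0) {ξ : ℝ}
    (hξ : clampedInv Ξ a b ξ ∈ Ioo a b) :
    HasDerivAt (clampedInv Ξ a b) (G (clampedInv Ξ a b ξ)) ξ := by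
  have hΞc : ContinuousOn Ξ (Ioo a b) := fun x hx => (hΞ' x hx).continuousAt.continuousWithinAt
  have hφ := continuous_clampedInv hab hΞ
  have hinv : ∀ᶠ η in 𝓝 ξ, Ξ (clampedInv Ξ a b η) = η :=
    eventually_of_mem ((isOpen_Ioo.preimage hφ).mem_nhds hξ) fun η hη => apply_clampedInv hΞ hΞc hη
  simpa only [inv_inv] using
    HasDerivAt.of_local_left_inverse hφ.continuousAt (hΞ' _ hξ) (inv_ne_zero (hG _ hξ)) hinv

end clampedInv

theorem contDiffOn_succ_of_hasDerivAt_comp {φ G : ℝ → ℝ} {U V : Set ℝ} (hU : IsOpen U)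
    (hmaps : MapsTo φ U V) (hφ : ∀ ξ ∈ U, HasDerivAt φ (G (φ ξ)) ξ) :
    ∀ {n : ℕ}, ContDiffOn ℝ n G V → ContDiffOn ℝ (n + 1) φ U := by
  have hdiff : DifferentiableOn ℝ φ U := fun ξ hξ =>
    (hφ ξ hξ).differentiableAt.differentiableWithinAt
  have hderiv : EqOn (deriv φ) (G ∘ φ) U := fun ξ hξ => (hφ ξ hξ).deriv
  intro n
  induction n with
  | zero =>
    intro hG
    rw [contDiffOn_succ_iff_deriv_of_isOpen hU]
    refine ⟨hdiff, by simp, ContDiffOn.congr ?_ hderiv⟩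
    exact contDiffOn_zero.2 ((contDiffOn_zero.1 hG).comp hdiff.continuousOn hmaps)
  | succ k ih =>
    intro hG
    have hφk := ih (hG.of_le (by norm_cast; omega))
    rw [contDiffOn_succ_iff_deriv_of_isOpen hU]
    exact ⟨hdiff, by simp, (hG.comp (by exact_mod_cast hφk) hmaps).congr hderiv⟩

theorem exists_strictMonoOn_hasDerivAt_inv {G : ℝ → ℝ} {a b : ℝ} (hab : a < b)
    (hG : ContinuousOn G (Ioo a b)) (hpos : ∀ x ∈ Ioo a b, 0 < G x) :
    ∃ Ξ : ℝ → ℝ, StrictMonoOn Ξ (Ioo a b) ∧ ∀ x ∈ Ioo a b, HasDerivAt Ξ (G x)⁻¹ x := by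
  have hGinv : ContinuousOn (fun x => (G x)⁻¹) (Ioo a b) :=
    hG.inv₀ fun x hx => (hpos x hx).ne'
  have hc : (a + b) / 2 ∈ Ioo a b := ⟨by linarith, by linarith⟩
  have hΞ' : ∀ x ∈ Ioo a b, HasDerivAt (fun x => ∫ t in (a + b) / 2..x, (G t)⁻¹) (G x)⁻¹ x :=
    fun x hx => intervalIntegral.integral_hasDerivAt_right
      (hGinv.mono (ordConnected_Ioo.uIcc_subset hc hx)).intervalIntegrable
      (hGinv.stronglyMeasurableAtFilter isOpen_Ioo x hx)
      (hGinv.continuousAt (isOpen_Ioo.mem_nhds hx))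
  refine ⟨_, strictMonoOn_of_deriv_pos (convex_Ioo a b)
    (fun x hx => (hΞ' x hx).continuousAt.continuousWithinAt) fun x hx => ?_, hΞ'⟩
  rw [interior_Ioo] at hx
  rw [(hΞ' x hx).deriv]
  exact inv_pos.2 (hpos x hx)

-- `φ` inverts a primitive of `1 / G`; it may reach `a` or `b` at a finite `ξ` and is constant
-- beyond (a sharp profile).
theorem exists_monotone_solution_of_pos {G : ℝ → ℝ} {a b : ℝ} (hab : a < b)
    (hG : ContDiffOn ℝ 1 G (Ioo a b)) (hpos : ∀ x ∈ Ioo a b, 0 < G x) :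
    ∃ φ : ℝ → ℝ, Continuous φ ∧ Monotone φ ∧ (∀ ξ, φ ξ ∈ Icc a b) ∧
      Tendsto φ atBot (𝓝 a) ∧ Tendsto φ atTop (𝓝 b) ∧
      ContDiffOn ℝ 2 φ {ξ | a < φ ξ ∧ φ ξ < b} ∧
      ∀ ξ, a < φ ξ → φ ξ < b → HasDerivAt φ (G (φ ξ)) ξ := by
  obtain ⟨Ξ, hΞ, hΞ'⟩ := exists_strictMonoOn_hasDerivAt_inv hab hG.continuousOn hpos
  have hφ' : ∀ ξ, a < clampedInv Ξ a b ξ → clampedInv Ξ a b ξ < b →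
      HasDerivAt (clampedInv Ξ a b) (G (clampedInv Ξ a b ξ)) ξ := fun ξ h₁ h₂ =>
    hasDerivAt_clampedInv hab hΞ hΞ' (fun x hx => (hpos x hx).ne') ⟨h₁, h₂⟩
  refine ⟨clampedInv Ξ a b, continuous_clampedInv hab hΞ, monotone_clampedInv hab.le,
    clampedInv_mem_Icc hab.le, tendsto_clampedInv_atBot hab hΞ, tendsto_clampedInv_atTop hab hΞ,
    ?_, hφ'⟩
  exact contDiffOn_succ_of_hasDerivAt_comp (n := 1) (V := Ioo a b)
    (isOpen_Ioo.preimage (continuous_clampedInv hab hΞ)) (fun _ h => h)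
    (fun ξ h => hφ' ξ h.1 h.2) (by exact_mod_cast hG)

theorem ContinuousOn.exists_lt_apply_eq_apply_eq {f : ℝ → ℝ} {a b θ v : ℝ}
    (hf : ContinuousOn f (Icc a b)) (hθ : θ ∈ Icc a b) (ha : f a < v) (hb : f b < v)
    (hθv : v < f θ) : ∃ x y, a < x ∧ x < y ∧ y < b ∧ f x = v ∧ f y = v := by
  obtain ⟨x, hx, hfx⟩ := intermediate_value_Ioo hθ.1 (hf.mono (Icc_subset_Icc_right hθ.2))
    ⟨ha, hθv⟩
  obtain ⟨y, hy, hfy⟩ := intermediate_value_Ioo' hθ.2 (hf.mono (Icc_subset_Icc_left hθ.1))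
    ⟨hb, hθv⟩
  exact ⟨x, y, hx.1, hx.2.trans hy.1, hy.2, hfx, hfy⟩

theorem waveSpeed_eq_zero_iff {f : ℝ → ℝ} {a b : ℝ} (hab : a ≠ b) :
    waveSpeed f a b = 0 ↔ f b = f a := by
  rw [waveSpeed, div_eq_zero_iff, sub_eq_zero, sub_eq_zero, or_iff_left hab.symm]

theorem redFlux_of_waveSpeed_eq_zero {f : ℝ → ℝ} {a b : ℝ} (h : waveSpeed f a b = 0) (ρ : ℝ) :
    redFlux f a b ρ = f ρ := by
  rw [redFlux, h, zero_mul, sub_zero]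

namespace FluxAssumption

variable {f : ℝ → ℝ}

theorem lt_of_mem_Ioo (hf : FluxAssumption f) {a b x : ℝ} (ha : 0 ≤ a) (hab : a < b)
    (hb : b ≤ 1) (hfab : f b = f a) (hx : x ∈ Ioo a b) : f a < f x := by
  have h := hf.2.1.lt_on_openSegment ⟨ha, hab.le.trans hb⟩ ⟨ha.trans hab.le, hb⟩ hab.ne
    (by rwa [openSegment_eq_Ioo hab])
  rwa [hfab, min_self] at h

theorem pos_half (hf : FluxAssumption f) : 0 < f (1 / 2) := by
  simpa only [hf.2.2.2.1] using
    hf.lt_of_mem_Ioo le_rfl one_pos le_rfl (hf.2.2.2.2.trans hf.2.2.2.1.symm)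
      ⟨by norm_num, by norm_num⟩

theorem exists_lt_apply_eq_apply_eq (hf : FluxAssumption f) {v : ℝ} (hv : 0 < v)
    (hvf : v < f (1 / 2)) : ∃ x y, 0 ≤ x ∧ x < y ∧ y ≤ 1 ∧ f x = v ∧ f y = v := by
  obtain ⟨x, y, hx, hxy, hy, hfx, hfy⟩ := hf.1.continuousOn.exists_lt_apply_eq_apply_eq
    (θ := 1 / 2) ⟨by norm_num, by norm_num⟩ (by rwa [hf.2.2.2.1]) (by rwa [hf.2.2.2.2]) hvf
  exact ⟨x, y, hx.le, hxy, hy.le, hfx, hfy⟩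

theorem exists_isProfile_of_eq (hf : FluxAssumption f) {D : ℝ → ℝ} (hD : DiffAssumption D)
    {a b : ℝ} (ha : 0 ≤ a) (hab : a < b) (hb : b ≤ 1) (hfab : f b = f a) :
    ∃ φ, IsProfile f D a b φ := by
  have hsub : Ioo a b ⊆ Icc 0 1 := fun x hx => ⟨(ha.trans_lt hx.1).le, (hx.2.trans_le hb).le⟩
  have hDpos : ∀ x ∈ Ioo a b, 0 < D x := fun x hx =>
    hD.2.2 x ⟨ha.trans_lt hx.1, hx.2.trans_le hb⟩
  have hG : ContDiffOn ℝ 1 (fun x => (f x - f a) / D x) (Ioo a b) :=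
    ((hf.1.mono hsub).sub contDiffOn_const).div (hD.1.mono hsub) fun x hx => (hDpos x hx).ne'
  have hGpos : ∀ x ∈ Ioo a b, 0 < (f x - f a) / D x := fun x hx =>
    div_pos (sub_pos.2 (hf.lt_of_mem_Ioo ha hab hb hfab hx)) (hDpos x hx)
  obtain ⟨φ, hcont, hmono, hIcc, hbot, htop, hC2, hφ'⟩ :=
    exists_monotone_solution_of_pos hab hG hGpos
  refine ⟨φ, hcont, hmono, hIcc, hbot, htop, hC2, fun ξ h₁ h₂ => ?_⟩
  have hred := redFlux_of_waveSpeed_eq_zero ((waveSpeed_eq_zero_iff hab.ne).2 hfab)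
  rw [(hφ' ξ h₁ h₂).deriv, hred, hred]
  exact ⟨hGpos _ ⟨h₁, h₂⟩, mul_div_cancel₀ _ (hDpos _ ⟨h₁, h₂⟩).ne'⟩

end FluxAssumption

theorem exists_endStates_flux_eq {H : Type*} {f : H → ℝ → ℝ} (hf : ∀ h, FluxAssumption (f h))
    {v : H → ℝ} (hv : ∀ h, 0 < v h ∧ v h < f h (1 / 2)) :
    ∃ lm lp : H → ℝ, EndStates lm lp ∧ (∀ h, f h (lp h) = f h (lm h)) ∧
      ∀ h, f h (lm h) = v h := by
  choose lm lp hlm hlmp hlp hflm hflp using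
    fun h => (hf h).exists_lt_apply_eq_apply_eq (hv h).1 (hv h).2
  exact ⟨lm, lp, fun h => ⟨hlm h, hlmp h, hlp h⟩, fun h => (hflp h).trans (hflm h).symm, hflm⟩

section Network

variable {m n : ℕ} {f : Fin m ⊕ Fin n → ℝ → ℝ} {α : Fin m → Fin n → ℝ}
  {lm lp : Fin m ⊕ Fin n → ℝ}

theorem spd_eq_zero_iff (hES : EndStates lm lp) (h : Fin m ⊕ Fin n) :
    spd f lm lp h = 0 ↔ f h (lp h) = f h (lm h) :=
  waveSpeed_eq_zero_iff (hES h).2.1.ne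

theorem tool_iff_of_spd_eq_zero {φ : Fin m ⊕ Fin n → ℝ → ℝ} (hspd : ∀ h, spd f lm lp h = 0) :
    Tool f α lm lp φ ↔ ∀ j, f (Sum.inr j) (lm (Sum.inr j))
      = ∑ i, α i j * f (Sum.inl i) (lm (Sum.inl i)) := by
  have hg : ∀ h ρ, gred f lm lp h ρ = f h ρ := fun h => redFlux_of_waveSpeed_eq_zero (hspd h)
  simp only [Tool, hspd, hg, zero_mul, zero_add]
  exact ⟨fun h => h 0, fun h _ => h⟩

theorem infinite_stationary_endStates (hm : 0 < m) (hf : ∀ h, FluxAssumption (f h))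
    (hα : ∀ i j, 0 < α i j) :
    Set.Infinite {p : (Fin m ⊕ Fin n → ℝ) × (Fin m ⊕ Fin n → ℝ) | EndStates p.1 p.2 ∧
      (∀ h, f h (p.2 h) = f h (p.1 h)) ∧
      ∀ j, f (Sum.inr j) (p.1 (Sum.inr j)) = ∑ i, α i j * f (Sum.inl i) (p.1 (Sum.inl i))} := by
  let i₀ : Fin m := ⟨0, hm⟩
  let w : Fin m ⊕ Fin n → ℝ := Sum.elim (fun _ => 1) fun j => ∑ i, α i j
  have hw : ∀ h, 0 < w h := by
    rintro (i | j)
    exacts [one_pos, Finset.sum_pos (fun i _ => hα i j) ⟨i₀, Finset.mem_univ _⟩]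
  have hne : (Finset.univ : Finset (Fin m ⊕ Fin n)).Nonempty := ⟨Sum.inl i₀, Finset.mem_univ _⟩
  set ε := Finset.univ.inf' hne fun h => f h (1 / 2) / w h
  have hε : 0 < ε := (Finset.lt_inf'_iff hne).2 fun h _ => div_pos (hf h).pos_half (hw h)
  refine Set.Infinite.of_image (fun p => f (Sum.inl i₀) (p.1 (Sum.inl i₀)))
    ((Ioo_infinite hε).mono fun c hc => ?_)
  have hv : ∀ h, 0 < c * w h ∧ c * w h < f h (1 / 2) := fun h =>
    ⟨mul_pos hc.1 (hw h),
      (lt_div_iff₀ (hw h)).1 (hc.2.trans_le (Finset.inf'_le _ (Finset.mem_univ h)))⟩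
  obtain ⟨lm, lp, hES, heq, hlm⟩ := exists_endStates_flux_eq hf hv
  refine ⟨(lm, lp), ⟨hES, heq, fun j => ?_⟩, by simp [hlm, w]⟩
  simp [hlm, w, Finset.mul_sum, mul_comm]

end Network

theorem stmt11_general (m n : ℕ) (hm : 0 < m)
    (f D : Fin m ⊕ Fin n → ℝ → ℝ) (α : Fin m → Fin n → ℝ)
    (hnet : NetworkSetup f D α)
    (Cond : (Fin m ⊕ Fin n → ℝ) → (Fin m ⊕ Fin n → ℝ) → Prop)
    (hCond : ∀ lm lp, Cond lm lp ↔
      (EndStates lm lp ∧ (∀ h, f h (lp h) = f h (lm h)) ∧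
       ∀ j : Fin n, f (Sum.inr j) (lm (Sum.inr j))
          = ∑ i : Fin m, α i j * f (Sum.inl i) (lm (Sum.inl i)))) :
    {p : (Fin m ⊕ Fin n → ℝ) × (Fin m ⊕ Fin n → ℝ) | Cond p.1 p.2}.Infinite ∧
    (∀ lm lp, Cond lm lp →
      ∃ φ : Fin m ⊕ Fin n → ℝ → ℝ,
        IsTravelingWave f D α lm lp φ ∧ ∀ h, spd f lm lp h = 0) ∧
    (∀ lm lp (φ : Fin m ⊕ Fin n → ℝ → ℝ), EndStates lm lp →
      IsTravelingWave f D α lm lp φ → (∀ h, spd f lm lp h = 0) → Cond lm lp) := by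
  refine ⟨?_, ?_, ?_⟩
  · simpa only [hCond] using
      infinite_stationary_endStates hm hnet.1 fun i j => (hnet.2.2.1 i j).1
  · intro lm lp hcond
    obtain ⟨hES, heq, hcoup⟩ := (hCond lm lp).1 hcond
    have hspd : ∀ h, spd f lm lp h = 0 := fun h => (spd_eq_zero_iff hES h).2 (heq h)
    choose φ hφ using fun h =>
      (hnet.1 h).exists_isProfile_of_eq (hnet.2.1 h) (hES h).1 (hES h).2.1 (hES h).2.2 (heq h)
    exact ⟨φ, ⟨hφ, (tool_iff_of_spd_eq_zero hspd).2 hcoup⟩, hspd⟩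
  · intro lm lp φ hES hTW hspd
    exact (hCond lm lp).2 ⟨hES, fun h => (spd_eq_zero_iff hES h).1 (hspd h),
      (tool_iff_of_spd_eq_zero hspd).1 hTW.2⟩

/-- The network problem admits infinitely many stationary traveling waves, characterized by
`f_h(ℓ_h⁺) = f_h(ℓ_h⁻)` for all `h` and `f_j(ℓ_j⁻) = ∑_i α_{i,j} f_i(ℓ_i⁻)` for all `j`. -/
theorem stmt11 (m n : ℕ) (hm : 0 < m) (hn : 0 < n)
    (f D : Fin m ⊕ Fin n → ℝ → ℝ) (α : Fin m → Fin n → ℝ)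
    (hnet : NetworkSetup f D α)
    (Cond : (Fin m ⊕ Fin n → ℝ) → (Fin m ⊕ Fin n → ℝ) → Prop)
    (hCond : ∀ lm lp, Cond lm lp ↔
      (EndStates lm lp ∧ (∀ h, f h (lp h) = f h (lm h)) ∧
       ∀ j : Fin n, f (Sum.inr j) (lm (Sum.inr j))
          = ∑ i : Fin m, α i j * f (Sum.inl i) (lm (Sum.inl i)))) :
    {p : (Fin m ⊕ Fin n → ℝ) × (Fin m ⊕ Fin n → ℝ) | Cond p.1 p.2}.Infinite ∧
    (∀ lm lp, Cond lm lp →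
      ∃ φ : Fin m ⊕ Fin n → ℝ → ℝ,
        IsTravelingWave f D α lm lp φ ∧ ∀ h, spd f lm lp h = 0) ∧
    (∀ lm lp (φ : Fin m ⊕ Fin n → ℝ → ℝ), EndStates lm lp →
      IsTravelingWave f D α lm lp φ → (∀ h, spd f lm lp h = 0) → Cond lm lp) :=
  stmt11_general m n hm f D α hnet Cond hCond
end

section
/- In the network setup, suppose c_j ≠ 0 for every j ∈ J and I₀ᶜ := {i ∈ I : c_i ≠ 0} is nonempty, and suppose the end states satisfy f_j(ℓ_j^±) = Σ_{i∈I} α_{i,j} f_i(L_{i,j}^±) for every j ∈ J. Set c_{i,j} = c_i/c_j, A_{i,j} = α_{i,j} c_{i,j} and k_j = Σ_{i∈I₀ᶜ} A_{i,j} L_{i,j}⁻ − ℓ_j⁻. Then, for any family of profiles (φ_h)_{h∈H}, the coupling condition (Tool) holds if and only if for every j ∈ J and every ξ ∈ ℝ: φ_j(ξ) = Σ_{i∈I₀ᶜ} A_{i,j} φ_i(c_{i,j} ξ) − k_j. -/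
open Set Filter MeasureTheory
open scoped Topology Classical

/-!
Writing `g_i(ρ) = f_i(ρ) - c_i ρ`, the chord slope `c_i` makes `g_i(ℓ_i⁻) = g_i(ℓ_i⁺)`, so
`g_i(ℓ_i⁻) = g_i(L_{i,j}⁻)` whichever end `L_{i,j}⁻` is. Together with the end-state relation
`f_j(ℓ_j⁻) = ∑ α_{i,j} f_i(L_{i,j}⁻)` the constant terms of (Tool) cancel, leaving
`c_j (φ_j(c_j t) - ℓ_j⁻) = ∑ α_{i,j} c_i (φ_i(c_i t) - L_{i,j}⁻)`. Dividing by `c_j` and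
substituting `ξ = c_j t` gives the representation; roads with `c_i = 0` drop out.
-/

theorem redFlux_left_eq_right (f : ℝ → ℝ) (a b : ℝ) : redFlux f a b a = redFlux f a b b := by
  rcases eq_or_ne a b with rfl | hab
  · rfl
  · have : b - a ≠ 0 := sub_ne_zero.2 hab.symm
    simp only [redFlux, waveSpeed]
    field_simp
    ring

theorem forall_mul_sub_eq_sum_iff {ι : Type*} [Fintype ι] {c : ℝ} (hc : c ≠ 0) (a : ℝ)
    (ψ : ℝ → ℝ) (w s L : ι → ℝ) (χ : ι → ℝ → ℝ) :
    (∀ t, c * (ψ (c * t) - a) = ∑ i, w i * (s i * (χ i (s i * t) - L i))) ↔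
      ∀ ξ, ψ ξ =
        ∑ i ∈ Finset.univ.filter (fun i => s i ≠ 0), (w i * (s i / c)) * χ i ((s i / c) * ξ)
          - (∑ i ∈ Finset.univ.filter (fun i => s i ≠ 0), (w i * (s i / c)) * L i - a) := by
  have hfilter : ∀ x : ι → ℝ,
      ∑ i ∈ Finset.univ.filter (fun i => s i ≠ 0), (w i * (s i / c)) * x i
        = (∑ i, w i * (s i * x i)) / c := by
    intro x
    rw [Finset.sum_filter_of_ne fun i _ hi hsi => by simp [hsi] at hi, Finset.sum_div]
    refine Finset.sum_congr rfl fun i _ => ?_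
    ring
  conv_rhs => rw [(mulLeft_bijective₀ c hc).surjective.forall]
  refine forall_congr' fun t => ?_
  have hscale : ∀ i, s i / c * (c * t) = s i * t := fun i => by field_simp
  have hsplit : ∑ i, w i * (s i * (χ i (s i * t) - L i))
      = ∑ i, w i * (s i * χ i (s i * t)) - ∑ i, w i * (s i * L i) := by
    rw [← Finset.sum_sub_distrib]
    exact Finset.sum_congr rfl fun i _ => by ring
  simp only [hscale, hfilter, hsplit]
  generalize ψ (c * t) = p
  generalize ∑ i, w i * (s i * χ i (s i * t)) = X
  generalize ∑ i, w i * (s i * L i) = Y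
  rw [show X / c - (Y / c - a) = (X - Y) / c + a by ring, ← sub_eq_iff_eq_add, eq_div_iff hc,
    mul_comm (p - a)]

section Network

variable {m n : ℕ} (f : Fin m ⊕ Fin n → ℝ → ℝ) (lm lp : Fin m ⊕ Fin n → ℝ)

theorem gred_apply (h : Fin m ⊕ Fin n) (ρ : ℝ) :
    gred f lm lp h ρ = f h ρ - spd f lm lp h * ρ := rfl

theorem gred_lm_eq_gred_Lminus (i : Fin m) (j : Fin n) :
    gred f lm lp (Sum.inl i) (lm (Sum.inl i)) = gred f lm lp (Sum.inl i) (Lminus f lm lp i j) := by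
  unfold Lminus
  split_ifs
  · rfl
  · exact redFlux_left_eq_right _ _ _

theorem tool_iff_forall_deviation (α : Fin m → Fin n → ℝ) (φ : Fin m ⊕ Fin n → ℝ → ℝ)
    (hfjm : ∀ j : Fin n, f (Sum.inr j) (lm (Sum.inr j))
      = ∑ i : Fin m, α i j * f (Sum.inl i) (Lminus f lm lp i j)) :
    Tool f α lm lp φ ↔ ∀ t : ℝ, ∀ j : Fin n,
      spd f lm lp (Sum.inr j) * (φ (Sum.inr j) (spd f lm lp (Sum.inr j) * t) - lm (Sum.inr j))
        = ∑ i : Fin m, α i j * (spd f lm lp (Sum.inl i) *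
            (φ (Sum.inl i) (spd f lm lp (Sum.inl i) * t) - Lminus f lm lp i j)) := by
  refine forall_congr' fun t => forall_congr' fun j => ?_
  have hsum : ∑ i : Fin m, α i j *
        (spd f lm lp (Sum.inl i) * φ (Sum.inl i) (spd f lm lp (Sum.inl i) * t)
          + gred f lm lp (Sum.inl i) (lm (Sum.inl i)))
      = ∑ i : Fin m, α i j * (spd f lm lp (Sum.inl i) *
            (φ (Sum.inl i) (spd f lm lp (Sum.inl i) * t) - Lminus f lm lp i j))
        + ∑ i : Fin m, α i j * f (Sum.inl i) (Lminus f lm lp i j) := by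
    rw [← Finset.sum_add_distrib]
    refine Finset.sum_congr rfl fun i _ => ?_
    rw [gred_lm_eq_gred_Lminus f lm lp i j, gred_apply]
    ring
  have hout : spd f lm lp (Sum.inr j) * φ (Sum.inr j) (spd f lm lp (Sum.inr j) * t)
        + gred f lm lp (Sum.inr j) (lm (Sum.inr j))
      = spd f lm lp (Sum.inr j) * (φ (Sum.inr j) (spd f lm lp (Sum.inr j) * t) - lm (Sum.inr j))
        + ∑ i : Fin m, α i j * f (Sum.inl i) (Lminus f lm lp i j) := by
    rw [gred_apply, hfjm j]
    ring
  rw [hout, hsum, add_left_inj]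

end Network

theorem stmt12_general (m n : ℕ)
    (f : Fin m ⊕ Fin n → ℝ → ℝ) (α : Fin m → Fin n → ℝ)
    (lm lp : Fin m ⊕ Fin n → ℝ)
    (hcj : ∀ j : Fin n, spd f lm lp (Sum.inr j) ≠ 0)
    (hfjm : ∀ j : Fin n, f (Sum.inr j) (lm (Sum.inr j))
      = ∑ i : Fin m, α i j * f (Sum.inl i) (Lminus f lm lp i j))
    (φ : Fin m ⊕ Fin n → ℝ → ℝ) :
    Tool f α lm lp φ ↔
      ∀ (j : Fin n) (ξ : ℝ),
        φ (Sum.inr j) ξ =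
          (∑ i ∈ Finset.univ.filter (fun i : Fin m => spd f lm lp (Sum.inl i) ≠ 0),
            (α i j * (spd f lm lp (Sum.inl i) / spd f lm lp (Sum.inr j))) *
              φ (Sum.inl i) ((spd f lm lp (Sum.inl i) / spd f lm lp (Sum.inr j)) * ξ))
          - kconst f α lm lp j := by
  rw [tool_iff_forall_deviation f lm lp α φ hfjm, forall_comm]
  exact forall_congr' fun j => forall_mul_sub_eq_sum_iff (hcj j) _ _ _ _ _ _

/-- In the non-stationary case, the coupling condition (Tool) is equivalent to the explicit
representation of the outgoing profiles in terms of the incoming ones. -/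
theorem stmt12 (m n : ℕ) (hm : 0 < m) (hn : 0 < n)
    (f D : Fin m ⊕ Fin n → ℝ → ℝ) (α : Fin m → Fin n → ℝ)
    (hnet : NetworkSetup f D α)
    (lm lp : Fin m ⊕ Fin n → ℝ) (hends : EndStates lm lp)
    (hcj : ∀ j : Fin n, spd f lm lp (Sum.inr j) ≠ 0)
    (hI0c : ∃ i : Fin m, spd f lm lp (Sum.inl i) ≠ 0)
    (hfjm : ∀ j : Fin n, f (Sum.inr j) (lm (Sum.inr j))
      = ∑ i : Fin m, α i j * f (Sum.inl i) (Lminus f lm lp i j))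
    (hfjp : ∀ j : Fin n, f (Sum.inr j) (lp (Sum.inr j))
      = ∑ i : Fin m, α i j * f (Sum.inl i) (Lplus f lm lp i j))
    (φ : Fin m ⊕ Fin n → ℝ → ℝ)
    (hφ : ∀ h, IsProfile (f h) (D h) (lm h) (lp h) (φ h)) :
    Tool f α lm lp φ ↔
      ∀ (j : Fin n) (ξ : ℝ),
        φ (Sum.inr j) ξ =
          (∑ i ∈ Finset.univ.filter (fun i : Fin m => spd f lm lp (Sum.inl i) ≠ 0),
            (α i j * (spd f lm lp (Sum.inl i) / spd f lm lp (Sum.inr j))) *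
              φ (Sum.inl i) ((spd f lm lp (Sum.inl i) / spd f lm lp (Sum.inr j)) * ξ))
          - kconst f α lm lp j :=
  stmt12_general m n f α lm lp hcj hfjm φ
end

section
/- In the network setup, let φ_i (i ∈ I) be profiles and assume I₀ᶜ := {i ∈ I : c_i ≠ 0} ≠ ∅. Fix j ∈ J and values l_j^± ∈ [0,1] satisfying f_j(l_j^±) = Σ_{i∈I} α_{i,j} f_i(L_{i,j}^±) and such that the corresponding speed c_j = (f_j(l_j⁺)−f_j(l_j⁻))/(l_j⁺−l_j⁻) is nonzero. Then l_j⁻ < l_j⁺. Moreover, the function ℓ_j(ξ) = Σ_{i∈I₀ᶜ} A_{i,j} φ_i(c_{i,j} ξ) − k_j (with c_{i,j} = c_i/c_j, A_{i,j} = α_{i,j} c_{i,j}, k_j = Σ_{i∈I₀ᶜ} A_{i,j} L_{i,j}⁻ − l_j⁻) is non-decreasing on ℝ and satisfies lim_{ξ→−∞} ℓ_j(ξ) = l_j⁻ and lim_{ξ→+∞} ℓ_j(ξ) = l_j⁺. -/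
/-!
Write `c_{i,j} = c_i / c_j`. Each summand `ξ ↦ α_{i,j} c_{i,j} φ_i(c_{i,j} ξ)` is non-decreasing:
when `c_{i,j} < 0` both the coefficient and `ξ ↦ φ_i(c_{i,j} ξ)` reverse order. The summand runs
from `A_{i,j} L_{i,j}⁻` at `-∞` to `A_{i,j} L_{i,j}⁺` at `+∞`, and its total increase
`A_{i,j} (L_{i,j}⁺ - L_{i,j}⁻) = α_{i,j} |c_{i,j}| (ℓ_i⁺ - ℓ_i⁻)` is positive. Since
`c (ℓ⁺ - ℓ⁻) = f(ℓ⁺) - f(ℓ⁻)` on every road, the coupling of the fluxes at `l_j^±` shows that these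
increases add up to `l_j⁺ - l_j⁻` (roads with `c_i = 0` contribute nothing), which is therefore
positive and is the total increase of `ℓ_j`.
-/

open Set Filter MeasureTheory
open scoped Topology Classical

open Finset

section RescaledProfile

variable {φ : ℝ → ℝ} {a b α r : ℝ}

theorem Monotone.const_mul_comp_const_mul (hφ : Monotone φ) (hα : 0 ≤ α) :
    Monotone fun ξ => α * r * φ (r * ξ) := by
  rcases le_total 0 r with hr | hr
  · exact (hφ.comp fun x y h => mul_le_mul_of_nonneg_left h hr).const_mul (mul_nonneg hα hr)
  · exact (hφ.comp_antitone fun x y h => mul_le_mul_of_nonpos_left h hr).const_mul_of_nonpos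
      (mul_nonpos_of_nonneg_of_nonpos hα hr)

theorem tendsto_comp_const_mul_atBot (ha : Tendsto φ atBot (𝓝 a)) (hb : Tendsto φ atTop (𝓝 b))
    (hr : r ≠ 0) : Tendsto (fun ξ => φ (r * ξ)) atBot (𝓝 (if 0 < r then a else b)) := by
  rcases hr.lt_or_gt with hr | hr
  · rw [if_neg hr.not_gt]
    exact hb.comp (tendsto_id.const_mul_atBot_of_neg hr)
  · rw [if_pos hr]
    exact ha.comp (tendsto_id.const_mul_atBot hr)

theorem tendsto_comp_const_mul_atTop (ha : Tendsto φ atBot (𝓝 a)) (hb : Tendsto φ atTop (𝓝 b))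
    (hr : r ≠ 0) : Tendsto (fun ξ => φ (r * ξ)) atTop (𝓝 (if 0 < r then b else a)) := by
  rcases hr.lt_or_gt with hr | hr
  · rw [if_neg hr.not_gt]
    exact ha.comp (tendsto_id.const_mul_atTop_of_neg hr)
  · rw [if_pos hr]
    exact hb.comp (tendsto_id.const_mul_atTop hr)

theorem mul_ite_sub_ite_pos (hα : 0 < α) (hr : r ≠ 0) (hab : a < b) :
    0 < α * r * ((if 0 < r then b else a) - if 0 < r then a else b) := by
  split_ifs with h
  · exact mul_pos (mul_pos hα h) (sub_pos.2 hab)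
  · exact mul_pos_of_neg_of_neg (mul_neg_of_pos_of_neg hα (lt_of_le_of_ne (not_lt.1 h) hr))
      (sub_neg.2 hab)

end RescaledProfile

theorem nonneg_mul_iff_pos_div {x y : ℝ} (hx : x ≠ 0) (hy : y ≠ 0) : 0 ≤ x * y ↔ 0 < x / y := by
  rw [(mul_ne_zero hx hy).symm.le_iff_lt, mul_pos_iff, div_pos_iff]

theorem waveSpeed_mul_sub (f : ℝ → ℝ) (a b : ℝ) : waveSpeed f a b * (b - a) = f b - f a := by
  rcases eq_or_ne b a with rfl | h
  · simp
  · exact div_mul_cancel₀ _ (sub_ne_zero.2 h)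

section Junction

variable {m n : ℕ} {f : Fin m ⊕ Fin n → ℝ → ℝ} {lm lp : Fin m ⊕ Fin n → ℝ} {i : Fin m}
  {j : Fin n}

theorem spd_mul_Lplus_sub_Lminus :
    spd f lm lp (Sum.inl i) * (Lplus f lm lp i j - Lminus f lm lp i j)
      = f (Sum.inl i) (Lplus f lm lp i j) - f (Sum.inl i) (Lminus f lm lp i j) := by
  have := waveSpeed_mul_sub (f (Sum.inl i)) (lm (Sum.inl i)) (lp (Sum.inl i))
  unfold Lplus Lminus spd
  split_ifs <;> linarith

theorem Lminus_eq_ite (hi : spd f lm lp (Sum.inl i) ≠ 0) (hj : spd f lm lp (Sum.inr j) ≠ 0) :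
    Lminus f lm lp i j = if 0 < spd f lm lp (Sum.inl i) / spd f lm lp (Sum.inr j)
      then lm (Sum.inl i) else lp (Sum.inl i) :=
  if_congr (nonneg_mul_iff_pos_div hi hj) rfl rfl

theorem Lplus_eq_ite (hi : spd f lm lp (Sum.inl i) ≠ 0) (hj : spd f lm lp (Sum.inr j) ≠ 0) :
    Lplus f lm lp i j = if 0 < spd f lm lp (Sum.inl i) / spd f lm lp (Sum.inr j)
      then lp (Sum.inl i) else lm (Sum.inl i) :=
  if_congr (nonneg_mul_iff_pos_div hi hj) rfl rfl

theorem mul_Lplus_sub_Lminus_pos {α : ℝ} (hα : 0 < α) (hlt : lm (Sum.inl i) < lp (Sum.inl i))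
    (hi : spd f lm lp (Sum.inl i) ≠ 0) (hj : spd f lm lp (Sum.inr j) ≠ 0) :
    0 < α * (spd f lm lp (Sum.inl i) / spd f lm lp (Sum.inr j)) *
      (Lplus f lm lp i j - Lminus f lm lp i j) := by
  rw [Lplus_eq_ite hi hj, Lminus_eq_ite hi hj]
  exact mul_ite_sub_ite_pos hα (div_ne_zero hi hj) hlt

section Profile

variable {D : ℝ → ℝ} {φ : ℝ → ℝ} {α : ℝ}

theorem IsProfile.tendsto_rescaled_atBot
    (hφ : IsProfile (f (Sum.inl i)) D (lm (Sum.inl i)) (lp (Sum.inl i)) φ)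
    (hi : spd f lm lp (Sum.inl i) ≠ 0) (hj : spd f lm lp (Sum.inr j) ≠ 0) :
    Tendsto (fun ξ => α * (spd f lm lp (Sum.inl i) / spd f lm lp (Sum.inr j)) *
        φ (spd f lm lp (Sum.inl i) / spd f lm lp (Sum.inr j) * ξ)) atBot
      (𝓝 (α * (spd f lm lp (Sum.inl i) / spd f lm lp (Sum.inr j)) * Lminus f lm lp i j)) := by
  obtain ⟨-, -, -, hbot, htop, -⟩ := hφ
  rw [Lminus_eq_ite hi hj]
  exact (tendsto_comp_const_mul_atBot hbot htop (div_ne_zero hi hj)).const_mul _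

theorem IsProfile.tendsto_rescaled_atTop
    (hφ : IsProfile (f (Sum.inl i)) D (lm (Sum.inl i)) (lp (Sum.inl i)) φ)
    (hi : spd f lm lp (Sum.inl i) ≠ 0) (hj : spd f lm lp (Sum.inr j) ≠ 0) :
    Tendsto (fun ξ => α * (spd f lm lp (Sum.inl i) / spd f lm lp (Sum.inr j)) *
        φ (spd f lm lp (Sum.inl i) / spd f lm lp (Sum.inr j) * ξ)) atTop
      (𝓝 (α * (spd f lm lp (Sum.inl i) / spd f lm lp (Sum.inr j)) * Lplus f lm lp i j)) := by
  obtain ⟨-, -, -, hbot, htop, -⟩ := hφ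
  rw [Lplus_eq_ite hi hj]
  exact (tendsto_comp_const_mul_atTop hbot htop (div_ne_zero hi hj)).const_mul _

end Profile

theorem sub_eq_sum_mul_Lplus_sub_Lminus {α : Fin m → Fin n → ℝ}
    (hfjm : f (Sum.inr j) (lm (Sum.inr j))
      = ∑ i : Fin m, α i j * f (Sum.inl i) (Lminus f lm lp i j))
    (hfjp : f (Sum.inr j) (lp (Sum.inr j))
      = ∑ i : Fin m, α i j * f (Sum.inl i) (Lplus f lm lp i j))
    (hcj : spd f lm lp (Sum.inr j) ≠ 0) :
    lp (Sum.inr j) - lm (Sum.inr j)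
      = ∑ i ∈ univ.filter (fun i : Fin m => spd f lm lp (Sum.inl i) ≠ 0),
          α i j * (spd f lm lp (Sum.inl i) / spd f lm lp (Sum.inr j)) *
            (Lplus f lm lp i j - Lminus f lm lp i j) := by
  have hflux : spd f lm lp (Sum.inr j) * (lp (Sum.inr j) - lm (Sum.inr j))
      = ∑ i, α i j * (spd f lm lp (Sum.inl i) * (Lplus f lm lp i j - Lminus f lm lp i j)) := by
    rw [spd, waveSpeed_mul_sub, hfjp, hfjm, ← sum_sub_distrib]
    refine sum_congr rfl fun i _ => ?_
    rw [spd_mul_Lplus_sub_Lminus, mul_sub]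
  rw [← sum_filter_of_ne fun i _ h => left_ne_zero_of_mul (right_ne_zero_of_mul h)] at hflux
  rw [eq_div_of_mul_eq hcj ((mul_comm _ _).trans hflux), sum_div]
  refine sum_congr rfl fun i _ => ?_
  ring

end Junction

theorem stmt13_general (m n : ℕ)
    (f D : Fin m ⊕ Fin n → ℝ → ℝ) (α : Fin m → Fin n → ℝ)
    (hnet : NetworkSetup f D α)
    (lm lp : Fin m ⊕ Fin n → ℝ)
    (hin : ∀ i : Fin m, 0 ≤ lm (Sum.inl i) ∧ lm (Sum.inl i) < lp (Sum.inl i) ∧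
      lp (Sum.inl i) ≤ 1)
    (φin : Fin m → ℝ → ℝ)
    (hφin : ∀ i : Fin m,
      IsProfile (f (Sum.inl i)) (D (Sum.inl i)) (lm (Sum.inl i)) (lp (Sum.inl i)) (φin i))
    (hI0c : ∃ i : Fin m, spd f lm lp (Sum.inl i) ≠ 0)
    (j : Fin n)
    (hfjm : f (Sum.inr j) (lm (Sum.inr j))
      = ∑ i : Fin m, α i j * f (Sum.inl i) (Lminus f lm lp i j))
    (hfjp : f (Sum.inr j) (lp (Sum.inr j))
      = ∑ i : Fin m, α i j * f (Sum.inl i) (Lplus f lm lp i j))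
    (hcj : spd f lm lp (Sum.inr j) ≠ 0) :
    lm (Sum.inr j) < lp (Sum.inr j) ∧
    Monotone (fun ξ : ℝ =>
      (∑ i ∈ Finset.univ.filter (fun i : Fin m => spd f lm lp (Sum.inl i) ≠ 0),
        (α i j * (spd f lm lp (Sum.inl i) / spd f lm lp (Sum.inr j))) *
          φin i ((spd f lm lp (Sum.inl i) / spd f lm lp (Sum.inr j)) * ξ))
        - kconst f α lm lp j) ∧
    Tendsto (fun ξ : ℝ =>
      (∑ i ∈ Finset.univ.filter (fun i : Fin m => spd f lm lp (Sum.inl i) ≠ 0),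
        (α i j * (spd f lm lp (Sum.inl i) / spd f lm lp (Sum.inr j))) *
          φin i ((spd f lm lp (Sum.inl i) / spd f lm lp (Sum.inr j)) * ξ))
        - kconst f α lm lp j) atBot (𝓝 (lm (Sum.inr j))) ∧
    Tendsto (fun ξ : ℝ =>
      (∑ i ∈ Finset.univ.filter (fun i : Fin m => spd f lm lp (Sum.inl i) ≠ 0),
        (α i j * (spd f lm lp (Sum.inl i) / spd f lm lp (Sum.inr j))) *
          φin i ((spd f lm lp (Sum.inl i) / spd f lm lp (Sum.inr j)) * ξ))
        - kconst f α lm lp j) atTop (𝓝 (lp (Sum.inr j))) := by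
  obtain ⟨-, -, hα, -⟩ := hnet
  have hbot := fun i (hi : i ∈ univ.filter (fun i : Fin m => spd f lm lp (Sum.inl i) ≠ 0)) =>
    (hφin i).tendsto_rescaled_atBot (α := α i j) (mem_filter.1 hi).2 hcj
  have htop := fun i (hi : i ∈ univ.filter (fun i : Fin m => spd f lm lp (Sum.inl i) ≠ 0)) =>
    (hφin i).tendsto_rescaled_atTop (α := α i j) (mem_filter.1 hi).2 hcj
  have hjump := sub_eq_sum_mul_Lplus_sub_Lminus hfjm hfjp hcj
  refine ⟨?_, ?_, ?_, ?_⟩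
  · obtain ⟨i₀, hi₀⟩ := hI0c
    have := sum_pos (fun i hi => mul_Lplus_sub_Lminus_pos (hα i j).1 (hin i).2.1
      (mem_filter.1 hi).2 hcj) ⟨i₀, mem_filter.2 ⟨mem_univ i₀, hi₀⟩⟩
    linarith
  · exact fun x y hxy => sub_le_sub_right (sum_le_sum fun i _ =>
      (hφin i).2.1.const_mul_comp_const_mul (hα i j).1.le hxy) _
  · convert (tendsto_finsetSum _ hbot).sub_const (kconst f α lm lp j) using 2
    rw [kconst, sub_sub_cancel]
  · convert (tendsto_finsetSum _ htop).sub_const (kconst f α lm lp j) using 2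
    simp only [kconst, ← sub_add, ← sum_sub_distrib, ← mul_sub, ← hjump, sub_add_cancel]

/-- Lemma on the candidate outgoing profile: `l_j⁻ < l_j⁺`, and the function
`ℓ_j(ξ) = ∑_{i ∈ I₀ᶜ} A_{i,j} φ_i(c_{i,j} ξ) - k_j` is non-decreasing with limits `l_j^∓`
at `∓∞`. -/
theorem stmt13 (m n : ℕ) (hm : 0 < m) (hn : 0 < n)
    (f D : Fin m ⊕ Fin n → ℝ → ℝ) (α : Fin m → Fin n → ℝ)
    (hnet : NetworkSetup f D α)
    (lm lp : Fin m ⊕ Fin n → ℝ)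
    (hin : ∀ i : Fin m, 0 ≤ lm (Sum.inl i) ∧ lm (Sum.inl i) < lp (Sum.inl i) ∧
      lp (Sum.inl i) ≤ 1)
    (φin : Fin m → ℝ → ℝ)
    (hφin : ∀ i : Fin m,
      IsProfile (f (Sum.inl i)) (D (Sum.inl i)) (lm (Sum.inl i)) (lp (Sum.inl i)) (φin i))
    (hI0c : ∃ i : Fin m, spd f lm lp (Sum.inl i) ≠ 0)
    (j : Fin n)
    (hlj : lm (Sum.inr j) ∈ Icc (0:ℝ) 1 ∧ lp (Sum.inr j) ∈ Icc (0:ℝ) 1)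
    (hfjm : f (Sum.inr j) (lm (Sum.inr j))
      = ∑ i : Fin m, α i j * f (Sum.inl i) (Lminus f lm lp i j))
    (hfjp : f (Sum.inr j) (lp (Sum.inr j))
      = ∑ i : Fin m, α i j * f (Sum.inl i) (Lplus f lm lp i j))
    (hcj : spd f lm lp (Sum.inr j) ≠ 0) :
    lm (Sum.inr j) < lp (Sum.inr j) ∧
    Monotone (fun ξ : ℝ =>
      (∑ i ∈ Finset.univ.filter (fun i : Fin m => spd f lm lp (Sum.inl i) ≠ 0),
        (α i j * (spd f lm lp (Sum.inl i) / spd f lm lp (Sum.inr j))) *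
          φin i ((spd f lm lp (Sum.inl i) / spd f lm lp (Sum.inr j)) * ξ))
        - kconst f α lm lp j) ∧
    Tendsto (fun ξ : ℝ =>
      (∑ i ∈ Finset.univ.filter (fun i : Fin m => spd f lm lp (Sum.inl i) ≠ 0),
        (α i j * (spd f lm lp (Sum.inl i) / spd f lm lp (Sum.inr j))) *
          φin i ((spd f lm lp (Sum.inl i) / spd f lm lp (Sum.inr j)) * ξ))
        - kconst f α lm lp j) atBot (𝓝 (lm (Sum.inr j))) ∧
    Tendsto (fun ξ : ℝ =>
      (∑ i ∈ Finset.univ.filter (fun i : Fin m => spd f lm lp (Sum.inl i) ≠ 0),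
        (α i j * (spd f lm lp (Sum.inl i) / spd f lm lp (Sum.inr j))) *
          φin i ((spd f lm lp (Sum.inl i) / spd f lm lp (Sum.inr j)) * ξ))
        - kconst f α lm lp j) atTop (𝓝 (lp (Sum.inr j))) :=
  stmt13_general m n f D α hnet lm lp hin φin hφin hI0c j hfjm hfjp hcj
end

section
/- In the network setup, let φ_h be a profile for each h ∈ H and suppose the continuity condition holds: φ_j(c_j t) = φ_i(c_i t) for every t ∈ ℝ and every (i,j) ∈ I×J. Then either c_h = 0 for all h ∈ H, or c_h ≠ 0 for all h ∈ H and all the speeds c_h have the same sign. In the latter case, for every (i,j) ∈ I×J: ℓ_j^± = ℓ_i^± =: ℓ^±; c_j^{-1} I_j = c_i^{-1} I_i; and c_j (g_j(ℓ) − g_j(ℓ⁻))/D_j(ℓ) = c_i (g_i(ℓ) − g_i(ℓ⁻))/D_i(ℓ) for every ℓ ∈ (ℓ⁻, ℓ⁺). If in addition the coupling condition (Tool) holds and the speeds are nonzero, then for every j ∈ J: c_j = Σ_{i∈I} α_{i,j} c_i, Σ_{j∈J} c_j = Σ_{i∈I} c_i, and Σ_{i∈I} α_{i,j} c_i/c_j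 = 1. -/
open Set Filter MeasureTheory
open scoped Topology Classical

/-!
The node relation `φ_j(c_j t) = φ_i(c_i t)` forces both sides to have the same limits at `±∞`.
Since a profile increases from `ℓ⁻` to `ℓ⁺ > ℓ⁻`, the limits of `t ↦ φ(c t)` at `-∞` and `+∞` are
`(ℓ⁻, ℓ⁺)`, `(φ 0, φ 0)` or `(ℓ⁺, ℓ⁻)` according to the sign of `c`; comparing them gives equal signs
and, for nonzero speeds, equal end states. Differentiating the relation at a point where both
profiles take the value `ℓ` and inserting the profile equation `D φ' = g(φ) - g(ℓ⁻)` gives the flux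
identity. Under (Tool), continuity reduces the coupling to `(c_j - ∑ α_{ij} c_i) φ_j(c_j t) = const`,
and `φ_j(c_j ·)` is not constant, so `c_j = ∑ α_{ij} c_i`; summing over `j` uses `∑_j α_{ij} = 1`.
-/

section Rescaling

variable {φ ψ : ℝ → ℝ} {a b a' b' c c' : ℝ}

lemma exists_tendsto_comp_const_mul (hbot : Tendsto φ atBot (𝓝 a))
    (htop : Tendsto φ atTop (𝓝 b)) (c : ℝ) :
    ∃ l r, Tendsto (fun t => φ (c * t)) atBot (𝓝 l) ∧
      Tendsto (fun t => φ (c * t)) atTop (𝓝 r) ∧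
      (c < 0 → l = b ∧ r = a) ∧ (c = 0 → l = r) ∧ (0 < c → l = a ∧ r = b) := by
  rcases lt_trichotomy c 0 with hc | rfl | hc
  · exact ⟨b, a, htop.comp (tendsto_id.const_mul_atBot_of_neg hc),
      hbot.comp (tendsto_id.const_mul_atTop_of_neg hc), fun _ => ⟨rfl, rfl⟩,
      fun h => absurd h hc.ne, fun h => absurd h hc.not_gt⟩
  · simp only [zero_mul]
    exact ⟨φ 0, φ 0, tendsto_const_nhds, tendsto_const_nhds, fun h => absurd h (lt_irrefl 0),
      fun _ => rfl, fun h => absurd h (lt_irrefl 0)⟩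
  · exact ⟨a, b, hbot.comp (tendsto_id.const_mul_atBot hc),
      htop.comp (tendsto_id.const_mul_atTop hc), fun h => absurd h hc.not_gt,
      fun h => absurd h hc.ne', fun _ => ⟨rfl, rfl⟩⟩

lemma sign_eq_and_ends_eq_of_comp_const_mul_eq (hab : a < b) (hab' : a' < b')
    (hφbot : Tendsto φ atBot (𝓝 a)) (hφtop : Tendsto φ atTop (𝓝 b))
    (hψbot : Tendsto ψ atBot (𝓝 a')) (hψtop : Tendsto ψ atTop (𝓝 b'))
    (h : ∀ t, φ (c * t) = ψ (c' * t)) :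
    SignType.sign c = SignType.sign c' ∧ (c ≠ 0 → a = a' ∧ b = b') := by
  obtain ⟨l, r, hbot, htop, hneg, hzero, hpos⟩ := exists_tendsto_comp_const_mul hφbot hφtop c
  obtain ⟨l', r', hbot', htop', hneg', hzero', hpos'⟩ :=
    exists_tendsto_comp_const_mul hψbot hψtop c'
  have heq : (fun t => φ (c * t)) = fun t => ψ (c' * t) := funext h
  rw [heq] at hbot htop
  obtain rfl := tendsto_nhds_unique hbot hbot'
  obtain rfl := tendsto_nhds_unique htop htop'
  rcases lt_trichotomy c 0 with hc | rfl | hc <;>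
    rcases lt_trichotomy c' 0 with hc' | rfl | hc' <;>
    simp_all [sign_neg, sign_pos] <;> linarith

lemma exists_ne_comp_const_mul (hab : a ≠ b) (hbot : Tendsto φ atBot (𝓝 a))
    (htop : Tendsto φ atTop (𝓝 b)) (hc : c ≠ 0) : ∃ s t, φ (c * s) ≠ φ (c * t) := by
  by_contra! hconst
  have hφ : φ = fun _ => φ 0 := funext fun ξ => by
    simpa [mul_div_cancel₀ ξ hc] using hconst (ξ / c) 0
  rw [hφ] at hbot htop
  exact hab ((tendsto_nhds_unique tendsto_const_nhds hbot).symm.trans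
    (tendsto_nhds_unique tendsto_const_nhds htop))

lemma image_inv_mul_eq_preimage_mul {c : ℝ} (hc : c ≠ 0) (S : Set ℝ) :
    (fun x => c⁻¹ * x) '' S = (fun x => c * x) ⁻¹' S := by
  simpa using (Equiv.mulLeft₀ c hc).symm.image_eq_preimage_symm S

lemma mul_deriv_comp_const_mul_eq (h : ∀ t, φ (c * t) = ψ (c' * t)) (t : ℝ) :
    c * deriv φ (c * t) = c' * deriv ψ (c' * t) := by
  have heq : (fun t => φ (c * t)) = fun t => ψ (c' * t) := funext h
  simpa only [deriv_comp_mul_left, smul_eq_mul] using congrArg (deriv · t) heq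

namespace IsProfile

variable {f D : ℝ → ℝ}

lemma exists_eq (hφ : IsProfile f D a b φ) {ℓ : ℝ} (hℓ : ℓ ∈ Ioo a b) : ∃ ξ, φ ξ = ℓ :=
  mem_range_of_exists_le_of_exists_ge hφ.1 (hφ.2.2.2.1.eventually (eventually_le_nhds hℓ.1)).exists
    (hφ.2.2.2.2.1.eventually (eventually_ge_nhds hℓ.2)).exists

lemma deriv_eq (hφ : IsProfile f D a b φ) {ξ : ℝ} (hξ : φ ξ ∈ Ioo a b) (hD : D (φ ξ) ≠ 0) :
    deriv φ ξ = (redFlux f a b (φ ξ) - redFlux f a b a) / D (φ ξ) :=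
  eq_div_of_mul_eq hD (by rw [mul_comm]; exact (hφ.2.2.2.2.2.2 ξ hξ.1 hξ.2).2)

end IsProfile

lemma speed_mul_flux_div_eq {f₁ D₁ f₂ D₂ : ℝ → ℝ} (h₁ : IsProfile f₁ D₁ a b φ)
    (h₂ : IsProfile f₂ D₂ a b ψ) (hc : c ≠ 0) (h : ∀ t, φ (c * t) = ψ (c' * t)) {ℓ : ℝ}
    (hℓ : ℓ ∈ Ioo a b) (hD₁ : D₁ ℓ ≠ 0) (hD₂ : D₂ ℓ ≠ 0) :
    c * ((redFlux f₁ a b ℓ - redFlux f₁ a b a) / D₁ ℓ)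
      = c' * ((redFlux f₂ a b ℓ - redFlux f₂ a b a) / D₂ ℓ) := by
  obtain ⟨ξ, hξ⟩ := h₁.exists_eq hℓ
  set t := c⁻¹ * ξ
  have hct : c * t = ξ := mul_inv_cancel_left₀ hc ξ
  have hψ : ψ (c' * t) = ℓ := by rw [← h, hct, hξ]
  have hderiv := mul_deriv_comp_const_mul_eq h t
  rw [h₁.deriv_eq (by rwa [hct, hξ]) (by rwa [hct, hξ]), h₂.deriv_eq (by rwa [hψ]) (by rwa [hψ]),
    hct, hξ, hψ] at hderiv
  exact hderiv

end Rescaling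

lemma eq_zero_of_forall_mul_eq_const {u : ℝ → ℝ} {k C : ℝ} (hu : ∃ s t, u s ≠ u t)
    (h : ∀ t, k * u t = C) : k = 0 := by
  obtain ⟨s, t, hst⟩ := hu
  by_contra hk
  exact hst (mul_left_cancel₀ hk ((h s).trans (h t).symm))

lemma forall_eq_zero_or_forall_pos_or_forall_neg {ι : Type*} {c : ι → ℝ} {s : SignType}
    (hs : ∀ h, SignType.sign (c h) = s) :
    (∀ h, c h = 0) ∨ ((∀ h, c h ≠ 0) ∧ ((∀ h, 0 < c h) ∨ (∀ h, c h < 0))) := by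
  rcases s with _ | _ | _
  · exact Or.inl fun h => sign_eq_zero_iff.mp (hs h)
  · exact Or.inr ⟨fun h => (sign_eq_neg_one_iff.mp (hs h)).ne,
      Or.inr fun h => sign_eq_neg_one_iff.mp (hs h)⟩
  · exact Or.inr ⟨fun h => (sign_eq_one_iff.mp (hs h)).ne',
      Or.inl fun h => sign_eq_one_iff.mp (hs h)⟩

lemma sum_eq_sum_of_eq_sum_mul {ι κ : Type*} [Fintype ι] [Fintype κ] {α : ι → κ → ℝ}
    {x : ι → ℝ} {y : κ → ℝ} (hrow : ∀ i, ∑ j, α i j = 1) (hy : ∀ j, y j = ∑ i, α i j * x i) :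
    ∑ j, y j = ∑ i, x i := by
  simp_rw [hy]
  rw [Finset.sum_comm]
  simp_rw [← Finset.sum_mul, hrow, one_mul]

section Network

variable {m n : ℕ} {f : Fin m ⊕ Fin n → ℝ → ℝ} {α : Fin m → Fin n → ℝ}
  {lm lp : Fin m ⊕ Fin n → ℝ} {φ : Fin m ⊕ Fin n → ℝ → ℝ}

lemma spd_inr_eq_sum_of_tool (htool : Tool f α lm lp φ)
    (hcont : ∀ (t : ℝ) (i : Fin m) (j : Fin n),
      φ (Sum.inr j) (spd f lm lp (Sum.inr j) * t) = φ (Sum.inl i) (spd f lm lp (Sum.inl i) * t))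
    {j : Fin n} (hab : lm (Sum.inr j) ≠ lp (Sum.inr j))
    (hbot : Tendsto (φ (Sum.inr j)) atBot (𝓝 (lm (Sum.inr j))))
    (htop : Tendsto (φ (Sum.inr j)) atTop (𝓝 (lp (Sum.inr j))))
    (hj : spd f lm lp (Sum.inr j) ≠ 0) :
    spd f lm lp (Sum.inr j) = ∑ i, α i j * spd f lm lp (Sum.inl i) := by
  set c := spd f lm lp
  refine sub_eq_zero.mp (eq_zero_of_forall_mul_eq_const (exists_ne_comp_const_mul hab hbot htop hj)
    (C := ∑ i, α i j * gred f lm lp (Sum.inl i) (lm (Sum.inl i)) - gred f lm lp (Sum.inr j)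
      (lm (Sum.inr j))) fun t => ?_)
  have hsum : ∑ i, α i j * (c (Sum.inl i) * φ (Sum.inl i) (c (Sum.inl i) * t)
        + gred f lm lp (Sum.inl i) (lm (Sum.inl i)))
      = (∑ i, α i j * c (Sum.inl i)) * φ (Sum.inr j) (c (Sum.inr j) * t)
        + ∑ i, α i j * gred f lm lp (Sum.inl i) (lm (Sum.inl i)) := by
    rw [Finset.sum_mul, ← Finset.sum_add_distrib]
    refine Finset.sum_congr rfl fun i _ => ?_
    rw [hcont t i j]
    ring
  linear_combination htool t j + hsum

end Network

/-- Consequences of the continuity condition `φ_j(c_j t) = φ_i(c_i t)` at the node. -/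
theorem stmt15 (m n : ℕ) (hm : 0 < m) (hn : 0 < n)
    (f D : Fin m ⊕ Fin n → ℝ → ℝ) (α : Fin m → Fin n → ℝ)
    (hnet : NetworkSetup f D α)
    (lm lp : Fin m ⊕ Fin n → ℝ) (hends : EndStates lm lp)
    (φ : Fin m ⊕ Fin n → ℝ → ℝ)
    (hφ : ∀ h, IsProfile (f h) (D h) (lm h) (lp h) (φ h))
    (hcont : ∀ (t : ℝ) (i : Fin m) (j : Fin n),
      φ (Sum.inr j) (spd f lm lp (Sum.inr j) * t)
        = φ (Sum.inl i) (spd f lm lp (Sum.inl i) * t)) :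
    ((∀ h, spd f lm lp h = 0) ∨
      ((∀ h, spd f lm lp h ≠ 0) ∧
        ((∀ h, 0 < spd f lm lp h) ∨ (∀ h, spd f lm lp h < 0)))) ∧
    ((∃ h, spd f lm lp h ≠ 0) →
      ∀ (i : Fin m) (j : Fin n),
        lm (Sum.inr j) = lm (Sum.inl i) ∧ lp (Sum.inr j) = lp (Sum.inl i) ∧
        (fun x => (spd f lm lp (Sum.inr j))⁻¹ * x) ''
            {ξ | lm (Sum.inr j) < φ (Sum.inr j) ξ ∧ φ (Sum.inr j) ξ < lp (Sum.inr j)}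
          = (fun x => (spd f lm lp (Sum.inl i))⁻¹ * x) ''
              {ξ | lm (Sum.inl i) < φ (Sum.inl i) ξ ∧ φ (Sum.inl i) ξ < lp (Sum.inl i)} ∧
        ∀ ℓ ∈ Ioo (lm (Sum.inl i)) (lp (Sum.inl i)),
          spd f lm lp (Sum.inr j) *
              ((gred f lm lp (Sum.inr j) ℓ - gred f lm lp (Sum.inr j) (lm (Sum.inr j)))
                / D (Sum.inr j) ℓ)
            = spd f lm lp (Sum.inl i) *
                ((gred f lm lp (Sum.inl i) ℓ - gred f lm lp (Sum.inl i) (lm (Sum.inl i)))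
                  / D (Sum.inl i) ℓ)) ∧
    (Tool f α lm lp φ → (∀ h, spd f lm lp h ≠ 0) →
      ∀ j : Fin n,
        spd f lm lp (Sum.inr j) = (∑ i : Fin m, α i j * spd f lm lp (Sum.inl i)) ∧
        (∑ j' : Fin n, spd f lm lp (Sum.inr j')) = (∑ i : Fin m, spd f lm lp (Sum.inl i)) ∧
        (∑ i : Fin m, α i j * (spd f lm lp (Sum.inl i) / spd f lm lp (Sum.inr j))) = 1) := by
  set c := spd f lm lp
  have hnode (i : Fin m) (j : Fin n) :=
    sign_eq_and_ends_eq_of_comp_const_mul_eq (hends (Sum.inr j)).2.1 (hends (Sum.inl i)).2.1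
      (hφ _).2.2.2.1 (hφ _).2.2.2.2.1 (hφ _).2.2.2.1 (hφ _).2.2.2.2.1 (hcont · i j)
  have hsign : ∀ h, SignType.sign (c h) = SignType.sign (c (Sum.inl ⟨0, hm⟩)) := by
    rintro (i | j)
    · rw [← (hnode i ⟨0, hn⟩).1, (hnode ⟨0, hm⟩ ⟨0, hn⟩).1]
    · exact (hnode ⟨0, hm⟩ j).1
  have hdich := forall_eq_zero_or_forall_pos_or_forall_neg hsign
  refine ⟨hdich, fun ⟨h₀, hh₀⟩ i j => ?_, fun htool hne j => ?_⟩
  · have hne : ∀ h, c h ≠ 0 := (hdich.resolve_left fun hz => hh₀ (hz h₀)).1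
    obtain ⟨hlm, hlp⟩ := (hnode i j).2 (hne _)
    refine ⟨hlm, hlp, ?_, fun ℓ hℓ => ?_⟩
    · rw [image_inv_mul_eq_preimage_mul (hne _), image_inv_mul_eq_preimage_mul (hne _)]
      ext t
      simp only [mem_preimage, mem_ofPred_eq, hcont t i j, hlm, hlp]
    · have hℓ01 : ℓ ∈ Ioo (0 : ℝ) 1 :=
        ⟨(hends _).1.trans_lt hℓ.1, hℓ.2.trans_le (hends _).2.2⟩
      have hφj := hφ (Sum.inr j)
      rw [hlm, hlp] at hφj
      simp only [gred, hlm, hlp]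
      exact speed_mul_flux_div_eq hφj (hφ (Sum.inl i)) (hne _) (hcont · i j) hℓ
        ((hnet.2.1 _).2.2 ℓ hℓ01).ne' ((hnet.2.1 _).2.2 ℓ hℓ01).ne'
  · have hbalance (j : Fin n) : c (Sum.inr j) = ∑ i, α i j * c (Sum.inl i) :=
      spd_inr_eq_sum_of_tool htool hcont (hends _).2.1.ne (hφ _).2.2.2.1 (hφ _).2.2.2.2.1 (hne _)
    refine ⟨hbalance j, sum_eq_sum_of_eq_sum_mul hnet.2.2.2 hbalance, ?_⟩
    simp_rw [mul_div_assoc', ← Finset.sum_div, ← hbalance, div_self (hne (Sum.inr j))]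
end

section
/- In the network setup, assume the proportional structure f_h(ℓ) = v_h f(ℓ) and D_h(ℓ) = δ_h D(ℓ) for ℓ ∈ [0,1], where v_h, δ_h > 0 are constants, f satisfies (f) and D satisfies (D). Then the network problem admits a traveling wave at profile level with c_h ≠ 0 for every h ∈ H which satisfies the continuity condition (φ_j(c_j t) = φ_i(c_i t) for all t ∈ ℝ and all (i,j) ∈ I×J) if and only if for every (i,j) ∈ I×J: (v_i/v_j)² = δ_i/δ_j and Σ_{i∈I} α_{i,j} (v_i/v_j) = 1. -/
open Set Filter MeasureTheory
open scoped Topology Classical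

/-!
Let `G(ρ) = g₀(ρ) - g₀(ℓ⁻)` be the reduced flux of `f₀`. On road `h` the profile equation reads
`δ_h D₀(φ) φ' = v_h G(φ)` and `c_h = v_h c₀`, so `ξ ↦ η (v_h / δ_h * ξ)` is a profile of road `h`
whenever `η` is one of `(f₀, D₀)`, and then `φ_h(c_h t) = η((v_h² / δ_h) c₀ t)`. Hence equal
ratios `v_h² / δ_h` give continuity, and (Tool) reduces to `v_j = ∑_i α_{i,j} v_i`.

Conversely, continuity forces all roads to share their end states and the wave
`ψ(t) = φ_h(c_h t)`. At a time where `ψ` lies strictly between the end states, the profile equation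
gives `ψ' = (v_h² / δ_h) c₀ G(ψ) / D₀(ψ)`, so `v_h² / δ_h` cannot depend on `h`; and since `ψ` is
not constant, (Tool) forces `v_j = ∑_i α_{i,j} v_i`.

A profile of `(f₀, D₀)` is the inverse of `Ψ(u) = ∫ D₀ / G`. Since `G` is Lipschitz and vanishes at
both end states, `D₀ / G` is not integrable at either end, so `Ψ` maps `(ℓ⁻, ℓ⁺)` onto `ℝ`.
-/

theorem tendsto_intervalIntegral_nhdsLT_atTop {g : ℝ → ℝ} {u₀ b C : ℝ} (hu₀ : u₀ < b)
    (hC : 0 < C) (hg : ContinuousOn g (Ico u₀ b)) (hlb : ∀ s ∈ Ico u₀ b, C / (b - s) ≤ g s) :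
    Tendsto (fun u => ∫ s in u₀..u, g s) (𝓝[<] b) atTop := by
  have hgap : Tendsto (fun u => b - u) (𝓝[<] b) (𝓝[>] 0) := by
    refine tendsto_nhdsWithin_iff.2 ⟨?_, ?_⟩
    · simpa using ((continuous_sub_left b).tendsto b).mono_left nhdsWithin_le_nhds
    · filter_upwards [self_mem_nhdsWithin] with u (hu : u < b) using sub_pos.2 hu
  have hlog : Tendsto (fun u => C * Real.log (b - u₀) - C * Real.log (b - u)) (𝓝[<] b) atTop :=
    tendsto_atTop_add_const_left _ _ <| by
      simpa using
        (Real.tendsto_log_nhdsGT_zero.comp hgap).const_mul_atBot_of_neg (neg_neg_of_pos hC)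
  refine tendsto_atTop_mono' _ ?_ hlog
  filter_upwards [Ioo_mem_nhdsLT hu₀] with u hu
  have hsub : Icc u₀ u ⊆ Ico u₀ b := Icc_subset_Ico_right hu.2
  calc C * Real.log (b - u₀) - C * Real.log (b - u)
      = ∫ s in u₀..u, C / (b - s) := by
        simp_rw [div_eq_mul_inv, intervalIntegral.integral_const_mul]
        rw [intervalIntegral.integral_comp_sub_left (fun x => x⁻¹),
          integral_inv_of_pos (by linarith [hu.2]) (by linarith), Real.log_div (by linarith)
            (by linarith [hu.2])]
        ring
    _ ≤ ∫ s in u₀..u, g s := by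
        refine intervalIntegral.integral_mono_on hu.1.le (ContinuousOn.intervalIntegrable_of_Icc
          hu.1.le ?_) ((hg.mono hsub).intervalIntegrable_of_Icc hu.1.le)
          fun s hs => hlb s (hsub hs)
        exact continuousOn_const.div (continuousOn_const.sub continuousOn_id)
          fun s hs => by linarith [(hsub hs).2]

theorem tendsto_intervalIntegral_nhdsGT_atBot {g : ℝ → ℝ} {a u₀ C : ℝ} (hu₀ : a < u₀)
    (hC : 0 < C) (hg : ContinuousOn g (Ioc a u₀)) (hlb : ∀ s ∈ Ioc a u₀, C / (s - a) ≤ g s) :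
    Tendsto (fun u => ∫ s in u₀..u, g s) (𝓝[>] a) atBot := by
  have hrefl := tendsto_intervalIntegral_nhdsLT_atTop (neg_lt_neg hu₀) hC
    (hg.comp continuousOn_neg fun s hs => ⟨lt_neg_of_lt_neg hs.2, neg_le.1 hs.1⟩)
    fun s hs => by
      simpa [sub_eq_add_neg, add_comm] using hlb (-s) ⟨lt_neg_of_lt_neg hs.2, neg_le.1 hs.1⟩
  have := (tendsto_neg_atTop_atBot.comp hrefl).comp tendsto_neg_nhdsGT_neg
  rw [neg_neg] at this
  refine this.congr fun u => ?_
  simp [intervalIntegral.integral_comp_neg (fun s => g s), intervalIntegral.integral_symm u₀ u]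

theorem exists_strictMono_hasDerivAt_inv_comp {a b : ℝ} {Ψ Ψ' : ℝ → ℝ} (hab : a < b)
    (hΨ : ∀ u ∈ Ioo a b, HasDerivAt Ψ (Ψ' u) u) (hΨ' : ∀ u ∈ Ioo a b, 0 < Ψ' u)
    (hbot : Tendsto Ψ (𝓝[>] a) atBot) (htop : Tendsto Ψ (𝓝[<] b) atTop) :
    ∃ η : ℝ → ℝ, StrictMono η ∧ Continuous η ∧ range η = Ioo a b ∧
      Tendsto η atBot (𝓝[>] a) ∧ Tendsto η atTop (𝓝[<] b) ∧
      ∀ ξ, HasDerivAt η (Ψ' (η ξ))⁻¹ ξ := by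
  have hcont : ContinuousOn Ψ (Ioo a b) := fun u hu => (hΨ u hu).continuousAt.continuousWithinAt
  have hmono : StrictMonoOn Ψ (Ioo a b) := strictMonoOn_of_deriv_pos (convex_Ioo a b) hcont
    fun u hu => by
      rw [interior_Ioo] at hu
      exact (hΨ u hu).deriv ▸ hΨ' u hu
  have himage : Ψ '' Ioo a b = univ := univ_subset_iff.1 <|
    hcont.surjOn_of_tendsto (nonempty_Ioo.2 hab) ((tendsto_comp_coe_Ioo_atBot hab).2 hbot)
      ((tendsto_comp_coe_Ioo_atTop hab).2 htop)
  let e : Ioo a b ≃o ℝ := (hmono.orderIso _ _).trans <|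
    (OrderIso.setCongr _ _ himage).trans OrderIso.Set.univ
  have hcontη : Continuous fun ξ => (e.symm ξ : ℝ) :=
    continuous_subtype_val.comp e.toHomeomorph.continuous_invFun
  refine ⟨fun ξ => e.symm ξ, Subtype.strictMono_coe _ |>.comp e.symm.strictMono, hcontη,
    ((EquivLike.surjective _).range_comp _).trans Subtype.range_coe,
    (tendsto_Ioo_atBot).1 e.symm.tendsto_atBot, (tendsto_Ioo_atTop).1 e.symm.tendsto_atTop,
    fun ξ => ?_⟩
  exact (hΨ _ (e.symm ξ).2).of_local_left_inverse hcontη.continuousAt (hΨ' _ (e.symm ξ).2).ne'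
    (Eventually.of_forall e.apply_symm_apply)

theorem exists_strictMono_hasDerivAt_comp {a b L : ℝ} {F : ℝ → ℝ} (hab : a < b)
    (hF : ContinuousOn F (Ioo a b)) (hFpos : ∀ s ∈ Ioo a b, 0 < F s)
    (hFa : ∀ s ∈ Ioo a b, F s ≤ L * (s - a)) (hFb : ∀ s ∈ Ioo a b, F s ≤ L * (b - s)) :
    ∃ η : ℝ → ℝ, StrictMono η ∧ Continuous η ∧ range η = Ioo a b ∧
      Tendsto η atBot (𝓝[>] a) ∧ Tendsto η atTop (𝓝[<] b) ∧
      ∀ ξ, HasDerivAt η (F (η ξ)) ξ := by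
  obtain ⟨u₀, hu₀⟩ := nonempty_Ioo.2 hab
  have hL : 0 < L := pos_of_mul_pos_left ((hFpos u₀ hu₀).trans_le (hFa u₀ hu₀)) (sub_pos.2 hu₀.1).le
  have hinv : ContinuousOn (fun s => (F s)⁻¹) (Ioo a b) :=
    hF.inv₀ fun s hs => (hFpos s hs).ne'
  have hΨ : ∀ u ∈ Ioo a b, HasDerivAt (fun u => ∫ s in u₀..u, (F s)⁻¹) (F u)⁻¹ u :=
    fun u hu => intervalIntegral.integral_hasDerivAt_right
      ((hinv.mono (ordConnected_Ioo.uIcc_subset hu₀ hu)).intervalIntegrable)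
      (hinv.stronglyMeasurableAtFilter isOpen_Ioo u hu)
      (hinv.continuousAt (isOpen_Ioo.mem_nhds hu))
  have hlb : ∀ s ∈ Ioo a b, ∀ d > 0, F s ≤ L * d → L⁻¹ / d ≤ (F s)⁻¹ := fun s hs d hd h => by
    rw [div_eq_inv_mul, ← mul_inv, mul_comm d]; exact inv_anti₀ (hFpos s hs) h
  obtain ⟨η, hmono, hcont, hrange, hbot, htop, hderiv⟩ :=
    exists_strictMono_hasDerivAt_inv_comp hab hΨ (fun u hu => inv_pos.2 (hFpos u hu))
    (tendsto_intervalIntegral_nhdsGT_atBot hu₀.1 (inv_pos.2 hL)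
      (hinv.mono (Ioc_subset_Ioo_right hu₀.2)) fun s hs =>
        hlb s ⟨hs.1, hs.2.trans_lt hu₀.2⟩ _ (sub_pos.2 hs.1) (hFa s ⟨hs.1, hs.2.trans_lt hu₀.2⟩))
    (tendsto_intervalIntegral_nhdsLT_atTop hu₀.2 (inv_pos.2 hL)
      (hinv.mono (Ico_subset_Ioo_left hu₀.1)) fun s hs =>
        hlb s ⟨hu₀.1.trans_le hs.1, hs.2⟩ _ (sub_pos.2 hs.2) (hFb s ⟨hu₀.1.trans_le hs.1, hs.2⟩))
  exact ⟨η, hmono, hcont, hrange, hbot, htop, fun ξ => by simpa using hderiv ξ⟩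

theorem contDiff_two_of_hasDerivAt_comp {η F : ℝ → ℝ} {U : Set ℝ} (hF : ContDiffOn ℝ 1 F U)
    (hU : ∀ ξ, η ξ ∈ U) (hη : ∀ ξ, HasDerivAt η (F (η ξ)) ξ) : ContDiff ℝ 2 η := by
  have hdiff : Differentiable ℝ η := fun ξ => (hη ξ).differentiableAt
  have hderiv : deriv η = F ∘ η := funext fun ξ => (hη ξ).deriv
  have h1 : ContDiff ℝ 1 η := contDiff_one_iff_deriv.2
    ⟨hdiff, hderiv ▸ hF.continuousOn.comp_continuous hdiff.continuous hU⟩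
  exact contDiff_succ_iff_deriv.2 ⟨hdiff, by simp, hderiv ▸ hF.comp_contDiff h1 hU⟩

theorem redFlux_lt_redFlux {f : ℝ → ℝ} {s : Set ℝ} (hf : StrictConcaveOn ℝ s f) {a b ρ : ℝ}
    (ha : a ∈ s) (hb : b ∈ s) (hρ : ρ ∈ Ioo a b) : redFlux f a b a < redFlux f a b ρ := by
  have hslope := hf.secant_strict_mono ha (hf.1.ordConnected.out ha hb (Ioo_subset_Icc_self hρ))
    hb hρ.1.ne' (hρ.1.trans hρ.2).ne' hρ.2
  rw [lt_div_iff₀ (sub_pos.2 hρ.1)] at hslope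
  unfold redFlux waveSpeed
  linarith

theorem redFlux_right_eq_left {f : ℝ → ℝ} {a b : ℝ} (hab : a ≠ b) :
    redFlux f a b b = redFlux f a b a := by
  unfold redFlux waveSpeed
  field_simp [sub_ne_zero.2 hab.symm]
  ring

theorem waveSpeed_eq_mul {f f₀ : ℝ → ℝ} {v : ℝ} (hf : ∀ x, f x = v * f₀ x) (a b : ℝ) :
    waveSpeed f a b = v * waveSpeed f₀ a b := by
  simp only [waveSpeed, hf]
  ring

theorem redFlux_eq_mul {f f₀ : ℝ → ℝ} {v : ℝ} (hf : ∀ x, f x = v * f₀ x) (a b ρ : ℝ) :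
    redFlux f a b ρ = v * redFlux f₀ a b ρ := by
  simp only [redFlux, waveSpeed_eq_mul hf, hf]
  ring

theorem exists_isProfile {f D : ℝ → ℝ} (hf : FluxAssumption f) (hD : DiffAssumption D)
    {a b : ℝ} (ha : 0 < a) (hab : a < b) (hb : b < 1) : ∃ φ, IsProfile f D a b φ := by
  set G := fun s => redFlux f a b s - redFlux f a b a
  have hsub : Icc a b ⊆ Icc 0 1 := Icc_subset_Icc ha.le hb.le
  have hGC1 : ContDiffOn ℝ 1 G (Icc 0 1) :=
    (hf.1.sub (contDiffOn_const.mul contDiffOn_id)).sub contDiffOn_const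
  have hGpos : ∀ s ∈ Ioo a b, 0 < G s := fun s hs => sub_pos.2 <|
    redFlux_lt_redFlux hf.2.1 (hsub ⟨le_rfl, hab.le⟩) (hsub ⟨hab.le, le_rfl⟩) hs
  have hDpos : ∀ s ∈ Icc a b, 0 < D s := fun s hs => hD.2.2 s ⟨ha.trans_le hs.1, hs.2.trans_lt hb⟩
  obtain ⟨K, hK⟩ := (hGC1.mono hsub).exists_lipschitzOnWith one_ne_zero (convex_Icc a b)
    isCompact_Icc
  obtain ⟨x, hx, hmin⟩ := isCompact_Icc.exists_isMinOn (nonempty_Icc.2 hab.le)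
    (hD.1.continuousOn.mono hsub)
  have hbound : ∀ s ∈ Ioo a b, ∀ e ∈ Icc a b, G e = 0 → G s / D s ≤ K / D x * |s - e| := by
    intro s hs e he hGe
    have hGs : G s ≤ K * |s - e| := by
      have := hK.dist_le_mul s (Ioo_subset_Icc_self hs) e he
      rw [Real.dist_eq, Real.dist_eq, hGe, sub_zero] at this
      exact (le_abs_self _).trans this
    calc G s / D s ≤ G s / D x :=
          div_le_div_of_nonneg_left (hGpos s hs).le (hDpos x hx) (hmin (Ioo_subset_Icc_self hs))
      _ ≤ K * |s - e| / D x := div_le_div_of_nonneg_right hGs (hDpos x hx).le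
      _ = K / D x * |s - e| := by ring
  have hFC1 : ContDiffOn ℝ 1 (fun s => G s / D s) (Ioo a b) :=
    ((hGC1.mono (Ioo_subset_Icc_self.trans hsub)).div (hD.1.mono (Ioo_subset_Icc_self.trans hsub)))
      fun s hs => (hDpos s (Ioo_subset_Icc_self hs)).ne'
  obtain ⟨η, hmono, hcont, hrange, hbot, htop, hderiv⟩ := exists_strictMono_hasDerivAt_comp hab
    hFC1.continuousOn (fun s hs => div_pos (hGpos s hs) (hDpos s (Ioo_subset_Icc_self hs)))
    (fun s hs => by
      simpa [abs_of_pos (sub_pos.2 hs.1)] using hbound s hs a ⟨le_rfl, hab.le⟩ (sub_self _))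
    (fun s hs => by
      simpa [abs_of_neg (sub_neg.2 hs.2), G, redFlux_right_eq_left hab.ne] using
        hbound s hs b ⟨hab.le, le_rfl⟩ (by simp [G, redFlux_right_eq_left hab.ne]))
  have hmem : ∀ ξ, η ξ ∈ Ioo a b := fun ξ => hrange ▸ mem_range_self ξ
  refine ⟨η, hcont, hmono.monotone, fun ξ => Ioo_subset_Icc_self (hmem ξ),
    hbot.mono_right nhdsWithin_le_nhds, htop.mono_right nhdsWithin_le_nhds,
    (contDiff_two_of_hasDerivAt_comp hFC1 hmem hderiv).contDiffOn, fun ξ _ _ => ?_⟩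
  have hDη := hDpos _ (Ioo_subset_Icc_self (hmem ξ))
  rw [(hderiv ξ).deriv]
  exact ⟨div_pos (hGpos _ (hmem ξ)) hDη, mul_div_cancel₀ _ hDη.ne'⟩

theorem IsProfile.comp_mul {f D f' D' φ : ℝ → ℝ} {a b v δ : ℝ} (hφ : IsProfile f D a b φ)
    (hv : 0 < v) (hδ : 0 < δ) (hf' : ∀ x, f' x = v * f x) (hD' : ∀ x, D' x = δ * D x) :
    IsProfile f' D' a b (fun ξ => φ (v / δ * ξ)) := by
  obtain ⟨hcont, hmono, hmem, hbot, htop, hC2, hode⟩ := hφ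
  have hk : 0 < v / δ := div_pos hv hδ
  refine ⟨hcont.comp (continuous_const_mul _), hmono.comp (monotone_mul_left_of_nonneg hk.le),
    fun ξ => hmem _, hbot.comp (tendsto_id.const_mul_atBot hk),
    htop.comp (tendsto_id.const_mul_atTop hk),
    hC2.comp (contDiff_const.mul contDiff_id).contDiffOn fun ξ hξ => hξ, fun ξ h₁ h₂ => ?_⟩
  obtain ⟨hpos, heq⟩ := hode _ h₁ h₂
  dsimp only
  rw [deriv_comp_mul_left, smul_eq_mul, hD', redFlux_eq_mul hf', redFlux_eq_mul hf', ← mul_sub,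
    ← heq]
  exact ⟨mul_pos hk hpos, by field_simp⟩

theorem IsProfile.exists_comp_mul_eq {f D φ : ℝ → ℝ} {a b c u : ℝ} (hφ : IsProfile f D a b φ)
    (hc : c ≠ 0) (hu : u ∈ Ioo a b) : ∃ t, φ (c * t) = u := by
  obtain ⟨ξ, hξ⟩ := mem_range_of_exists_le_of_exists_ge hφ.1
    (hφ.2.2.2.1.eventually (eventually_le_nhds hu.1)).exists
    (hφ.2.2.2.2.1.eventually (eventually_ge_nhds hu.2)).exists
  exact ⟨ξ / c, by rw [mul_div_cancel₀ _ hc, hξ]⟩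

theorem IsProfile.hasDerivAt {f D φ : ℝ → ℝ} {a b ξ : ℝ} (hφ : IsProfile f D a b φ)
    (hξ : φ ξ ∈ Ioo a b) (hD : D (φ ξ) ≠ 0) :
    HasDerivAt φ ((redFlux f a b (φ ξ) - redFlux f a b a) / D (φ ξ)) ξ := by
  have hopen : IsOpen {ξ | a < φ ξ ∧ φ ξ < b} := isOpen_Ioo.preimage hφ.1
  have hdiff := (hφ.2.2.2.2.2.1.differentiableOn (by norm_num)).differentiableAt
    (hopen.mem_nhds hξ)
  rw [← (hφ.2.2.2.2.2.2 ξ hξ.1 hξ.2).2, mul_div_cancel_left₀ _ hD]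
  exact hdiff.hasDerivAt

theorem IsProfile.hasDerivAt_comp_mul {f₀ D₀ f D φ : ℝ → ℝ} {a b v δ c t : ℝ}
    (hφ : IsProfile f D a b φ) (hf : ∀ x, f x = v * f₀ x) (hD : ∀ x, D x = δ * D₀ x)
    (hδ : δ ≠ 0) (hmem : φ (v * c * t) ∈ Ioo a b) (hD₀ : D₀ (φ (v * c * t)) ≠ 0) :
    HasDerivAt (fun t => φ (v * c * t))
      (c * (v ^ 2 / δ) * ((redFlux f₀ a b (φ (v * c * t)) - redFlux f₀ a b a) / D₀ (φ (v * c * t))))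
      t := by
  have hderiv := (hφ.hasDerivAt hmem (by rw [hD]; exact mul_ne_zero hδ hD₀)).comp t
    ((hasDerivAt_id t).const_mul (v * c))
  rw [hD, redFlux_eq_mul hf, redFlux_eq_mul hf] at hderiv
  exact hderiv.congr_deriv (by field_simp)

theorem tendsto_comp_mul {φ : ℝ → ℝ} {a b c : ℝ} (hbot : Tendsto φ atBot (𝓝 a))
    (htop : Tendsto φ atTop (𝓝 b)) (hc : c ≠ 0) :
    Tendsto (fun t => φ (c * t)) atBot (𝓝 (if 0 < c then a else b)) ∧
      Tendsto (fun t => φ (c * t)) atTop (𝓝 (if 0 < c then b else a)) := by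
  rcases hc.lt_or_gt with hc | hc
  · simp only [hc.not_gt, if_false]
    exact ⟨htop.comp (tendsto_id.const_mul_atBot_of_neg hc),
      hbot.comp (tendsto_id.const_mul_atTop_of_neg hc)⟩
  · simp only [hc, if_true]
    exact ⟨hbot.comp (tendsto_id.const_mul_atBot hc), htop.comp (tendsto_id.const_mul_atTop hc)⟩

theorem eq_and_eq_of_comp_mul_eq {φ₁ φ₂ : ℝ → ℝ} {a₁ b₁ a₂ b₂ c₁ c₂ : ℝ} (hab₁ : a₁ < b₁)
    (hab₂ : a₂ < b₂) (hbot₁ : Tendsto φ₁ atBot (𝓝 a₁)) (htop₁ : Tendsto φ₁ atTop (𝓝 b₁))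
    (hbot₂ : Tendsto φ₂ atBot (𝓝 a₂)) (htop₂ : Tendsto φ₂ atTop (𝓝 b₂)) (hc₁ : c₁ ≠ 0)
    (hc₂ : c₂ ≠ 0) (heq : ∀ t, φ₁ (c₁ * t) = φ₂ (c₂ * t)) : a₁ = a₂ ∧ b₁ = b₂ := by
  obtain ⟨hbot₁', htop₁'⟩ := tendsto_comp_mul hbot₁ htop₁ hc₁
  obtain ⟨hbot₂', htop₂'⟩ := tendsto_comp_mul hbot₂ htop₂ hc₂
  have hbot := tendsto_nhds_unique (hbot₁'.congr heq) hbot₂'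
  have htop := tendsto_nhds_unique (htop₁'.congr heq) htop₂'
  split_ifs at hbot htop <;> constructor <;> linarith

theorem sq_div_eq_of_comp_mul_eq {f₀ D₀ f₁ D₁ f₂ D₂ φ₁ φ₂ : ℝ → ℝ} {A B c v₁ v₂ δ₁ δ₂ : ℝ}
    (hf₀ : StrictConcaveOn ℝ (Icc 0 1) f₀) (hD₀ : ∀ x ∈ Ioo (0:ℝ) 1, 0 < D₀ x) (hA : 0 ≤ A)
    (hAB : A < B) (hB : B ≤ 1) (hc : c ≠ 0) (hv₁ : v₁ ≠ 0) (hδ₁ : δ₁ ≠ 0) (hδ₂ : δ₂ ≠ 0)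
    (hf₁ : ∀ x, f₁ x = v₁ * f₀ x) (hD₁ : ∀ x, D₁ x = δ₁ * D₀ x)
    (hf₂ : ∀ x, f₂ x = v₂ * f₀ x) (hD₂ : ∀ x, D₂ x = δ₂ * D₀ x)
    (hφ₁ : IsProfile f₁ D₁ A B φ₁) (hφ₂ : IsProfile f₂ D₂ A B φ₂)
    (heq : ∀ t, φ₁ (v₁ * c * t) = φ₂ (v₂ * c * t)) : v₁ ^ 2 / δ₁ = v₂ ^ 2 / δ₂ := by
  obtain ⟨u, hu⟩ := nonempty_Ioo.2 hAB
  have hDu : 0 < D₀ u := hD₀ u ⟨hA.trans_lt hu.1, hu.2.trans_le hB⟩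
  have hGu : 0 < redFlux f₀ A B u - redFlux f₀ A B A :=
    sub_pos.2 (redFlux_lt_redFlux hf₀ ⟨hA, hAB.le.trans hB⟩ ⟨hA.trans hAB.le, hB⟩ hu)
  obtain ⟨t, ht₁⟩ := hφ₁.exists_comp_mul_eq (mul_ne_zero hv₁ hc) hu
  have ht₂ : φ₂ (v₂ * c * t) = u := heq t ▸ ht₁
  have hderiv₁ := hφ₁.hasDerivAt_comp_mul hf₁ hD₁ hδ₁ (ht₁ ▸ hu) (ht₁ ▸ hDu.ne')
  have hderiv₂ := hφ₂.hasDerivAt_comp_mul hf₂ hD₂ hδ₂ (ht₂ ▸ hu) (ht₂ ▸ hDu.ne')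
  rw [funext heq] at hderiv₁
  have := hderiv₁.unique hderiv₂
  rw [ht₁, ht₂] at this
  exact mul_left_cancel₀ hc (mul_right_cancel₀ (div_pos hGu hDu).ne' this)

theorem exists_apply_ne_of_strictConcaveOn {f : ℝ → ℝ} (hf : StrictConcaveOn ℝ (Icc 0 1) f) :
    ∃ a b : ℝ, 0 < a ∧ a < b ∧ b < 1 ∧ f a ≠ f b := by
  by_cases h : f (1 / 4) = f (1 / 2)
  · refine ⟨1 / 2, 3 / 4, by norm_num, by norm_num, by norm_num, fun h' => ?_⟩
    have := hf.slope_anti_adjacent (y := 1 / 2) (by norm_num : (1 / 4 : ℝ) ∈ Icc 0 1)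
      (by norm_num : (3 / 4 : ℝ) ∈ Icc 0 1) (by norm_num) (by norm_num)
    rw [h, h'] at this
    simp at this
  · exact ⟨1 / 4, 1 / 2, by norm_num, by norm_num, by norm_num, h⟩

theorem sq_div_eq_div_iff {v₁ v₂ δ₁ δ₂ : ℝ} (hv₂ : v₂ ≠ 0) (hδ₁ : δ₁ ≠ 0) (hδ₂ : δ₂ ≠ 0) :
    (v₁ / v₂) ^ 2 = δ₁ / δ₂ ↔ v₁ ^ 2 / δ₁ = v₂ ^ 2 / δ₂ := by
  rw [div_pow, div_eq_div_iff (pow_ne_zero 2 hv₂) hδ₂, div_eq_div_iff hδ₁ hδ₂]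
  constructor <;> intro h <;> linarith

theorem sum_mul_div_eq_one_iff {ι : Type*} (s : Finset ι) (α w : ι → ℝ) {c : ℝ} (hc : c ≠ 0) :
    ∑ i ∈ s, α i * (w i / c) = 1 ↔ ∑ i ∈ s, α i * w i = c := by
  simp_rw [← mul_div_assoc, ← Finset.sum_div, div_eq_one_iff_eq hc]

section Network

variable {m n : ℕ} {f₀ D₀ : ℝ → ℝ} {v δ : Fin m ⊕ Fin n → ℝ} {f D : Fin m ⊕ Fin n → ℝ → ℝ}
  {α : Fin m → Fin n → ℝ}

theorem sum_mul_eq_of_tool (hf : ∀ h ℓ, f h ℓ = v h * f₀ ℓ) {lm lp : Fin m ⊕ Fin n → ℝ}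
    {φ : Fin m ⊕ Fin n → ℝ → ℝ} {j : Fin n} (htool : Tool f α lm lp φ)
    (hends : ∀ i, lm (.inl i) = lm (.inr j) ∧ lp (.inl i) = lp (.inr j))
    (hcont : ∀ t i, φ (.inr j) (spd f lm lp (.inr j) * t) = φ (.inl i) (spd f lm lp (.inl i) * t))
    (hc : waveSpeed f₀ (lm (.inr j)) (lp (.inr j)) ≠ 0)
    (hψ : ∃ t₁ t₂,
      φ (.inr j) (spd f lm lp (.inr j) * t₁) ≠ φ (.inr j) (spd f lm lp (.inr j) * t₂)) :
    ∑ i, α i j * v (.inl i) = v (.inr j) := by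
  obtain ⟨t₁, t₂, hne⟩ := hψ
  have hline : ∀ t, (v (.inr j) - ∑ i, α i j * v (.inl i)) *
      (waveSpeed f₀ (lm (.inr j)) (lp (.inr j)) * φ (.inr j) (spd f lm lp (.inr j) * t)
        + redFlux f₀ (lm (.inr j)) (lp (.inr j)) (lm (.inr j))) = 0 := by
    intro t
    have h := htool t j
    simp only [← hcont t] at h
    generalize φ (.inr j) (spd f lm lp (.inr j) * t) = y at h ⊢
    simp only [gred, spd, redFlux_eq_mul (hf _), waveSpeed_eq_mul (hf _), hends] at h
    rw [sub_mul, Finset.sum_mul, sub_eq_zero]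
    convert h using 1
    · ring
    · exact Finset.sum_congr rfl fun i _ => by ring
  refine (sub_eq_zero.1 ?_).symm
  by_contra hS
  have h₁ := (mul_eq_zero.1 (hline t₁)).resolve_left hS
  have h₂ := (mul_eq_zero.1 (hline t₂)).resolve_left hS
  exact hne (mul_left_cancel₀ hc (by linarith))

theorem proportional_conditions_of_travelingWave (hf₀ : FluxAssumption f₀)
    (hD₀ : DiffAssumption D₀) (hv : ∀ h, 0 < v h) (hδ : ∀ h, 0 < δ h)
    (hf : ∀ h ℓ, f h ℓ = v h * f₀ ℓ) (hD : ∀ h ℓ, D h ℓ = δ h * D₀ ℓ)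
    {lm lp : Fin m ⊕ Fin n → ℝ} {φ : Fin m ⊕ Fin n → ℝ → ℝ} (hE : EndStates lm lp)
    (hTW : IsTravelingWave f D α lm lp φ) (hc : ∀ h, spd f lm lp h ≠ 0)
    (hcont : ∀ t i j, φ (.inr j) (spd f lm lp (.inr j) * t) = φ (.inl i) (spd f lm lp (.inl i) * t))
    (i : Fin m) (j : Fin n) :
    v (.inl i) ^ 2 / δ (.inl i) = v (.inr j) ^ 2 / δ (.inr j) ∧
      ∑ i', α i' j * v (.inl i') = v (.inr j) := by
  obtain ⟨hprof, htool⟩ := hTW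
  have hends : ∀ i, lm (.inl i) = lm (.inr j) ∧ lp (.inl i) = lp (.inr j) := fun i =>
    eq_and_eq_of_comp_mul_eq (hE _).2.1 (hE _).2.1 (hprof _).2.2.2.1 (hprof _).2.2.2.2.1
      (hprof _).2.2.2.1 (hprof _).2.2.2.2.1 (hc _) (hc _) fun t => (hcont t i j).symm
  set A := lm (.inr j)
  set B := lp (.inr j)
  have hspd : ∀ i, spd f lm lp (.inl i) = v (.inl i) * waveSpeed f₀ A B := fun i => by
    rw [spd, waveSpeed_eq_mul (hf _), (hends i).1, (hends i).2]
  have hspdj : spd f lm lp (.inr j) = v (.inr j) * waveSpeed f₀ A B := waveSpeed_eq_mul (hf _) _ _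
  have hc₀ : waveSpeed f₀ A B ≠ 0 := right_ne_zero_of_mul (hspdj ▸ hc (.inr j))
  obtain ⟨u₁, hAu₁, hu₁B⟩ := exists_between (hE (.inr j)).2.1
  obtain ⟨u₂, hu₁₂, hu₂B⟩ := exists_between hu₁B
  obtain ⟨t₁, ht₁⟩ := (hprof (.inr j)).exists_comp_mul_eq (hc _) ⟨hAu₁, hu₁B⟩
  obtain ⟨t₂, ht₂⟩ := (hprof (.inr j)).exists_comp_mul_eq (hc _) ⟨hAu₁.trans hu₁₂, hu₂B⟩
  refine ⟨?_, sum_mul_eq_of_tool hf htool hends (hcont · · j) hc₀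
    ⟨t₁, t₂, by rw [ht₁, ht₂]; exact hu₁₂.ne⟩⟩
  have hprofi : IsProfile (f (.inl i)) (D (.inl i)) A B (φ (.inl i)) := by
    rw [← (hends i).1, ← (hends i).2]
    exact hprof _
  exact sq_div_eq_of_comp_mul_eq hf₀.2.1 hD₀.2.2 (hE _).1 (hE _).2.1 (hE _).2.2 hc₀ (hv _).ne'
    (hδ _).ne' (hδ _).ne' (hf _) (hD _) (hf _) (hD _) hprofi (hprof _) fun t => by
      rw [← hspd, ← hspdj]
      exact (hcont t i j).symm

theorem exists_travelingWave_of_proportional (hf₀ : FluxAssumption f₀)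
    (hD₀ : DiffAssumption D₀) (hv : ∀ h, 0 < v h) (hδ : ∀ h, 0 < δ h)
    (hf : ∀ h ℓ, f h ℓ = v h * f₀ ℓ) (hD : ∀ h ℓ, D h ℓ = δ h * D₀ ℓ)
    (hsq : ∀ i j, v (.inl i) ^ 2 / δ (.inl i) = v (.inr j) ^ 2 / δ (.inr j))
    (hsum : ∀ j, ∑ i, α i j * v (.inl i) = v (.inr j)) :
    ∃ (lm lp : Fin m ⊕ Fin n → ℝ) (φ : Fin m ⊕ Fin n → ℝ → ℝ),
      EndStates lm lp ∧ IsTravelingWave f D α lm lp φ ∧ (∀ h, spd f lm lp h ≠ 0) ∧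
      ∀ t i j, φ (.inr j) (spd f lm lp (.inr j) * t) = φ (.inl i) (spd f lm lp (.inl i) * t) := by
  obtain ⟨a, b, ha, hab, hb, hfab⟩ := exists_apply_ne_of_strictConcaveOn hf₀.2.1
  obtain ⟨η, hη⟩ := exists_isProfile hf₀ hD₀ ha hab hb
  have hc₀ : waveSpeed f₀ a b ≠ 0 := div_ne_zero (sub_ne_zero.2 hfab.symm) (sub_ne_zero.2 hab.ne')
  have hspd : ∀ h, spd f (fun _ => a) (fun _ => b) h = v h * waveSpeed f₀ a b :=
    fun h => waveSpeed_eq_mul (hf h) a b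
  have hwave : ∀ h t, v h / δ h * (spd f (fun _ => a) (fun _ => b) h * t)
      = v h ^ 2 / δ h * waveSpeed f₀ a b * t := fun h t => by
    rw [hspd]
    ring
  refine ⟨fun _ => a, fun _ => b, fun h ξ => η (v h / δ h * ξ), fun _ => ⟨ha.le, hab, hb.le⟩,
    ⟨fun h => hη.comp_mul (hv h) (hδ h) (hf h) (hD h), fun t j => ?_⟩,
    fun h => hspd h ▸ mul_ne_zero (hv h).ne' hc₀, fun t i j => by simp only [hwave, hsq i j]⟩
  simp only [hwave]
  simp only [hsq _ j, hspd, gred, redFlux_eq_mul (hf _)]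
  generalize η (v (.inr j) ^ 2 / δ (.inr j) * waveSpeed f₀ a b * t) = y
  rw [← hsum j]
  simp only [Finset.sum_mul, ← Finset.sum_add_distrib]
  exact Finset.sum_congr rfl fun i _ => by ring

end Network

theorem stmt16_general (m n : ℕ) (hm : 0 < m)
    (f₀ D₀ : ℝ → ℝ) (hf₀ : FluxAssumption f₀) (hD₀ : DiffAssumption D₀)
    (v δ : Fin m ⊕ Fin n → ℝ) (hv : ∀ h, 0 < v h) (hδ : ∀ h, 0 < δ h)
    (f D : Fin m ⊕ Fin n → ℝ → ℝ)
    (hf : ∀ h ℓ, f h ℓ = v h * f₀ ℓ) (hD : ∀ h ℓ, D h ℓ = δ h * D₀ ℓ)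
    (α : Fin m → Fin n → ℝ) :
    (∃ (lm lp : Fin m ⊕ Fin n → ℝ) (φ : Fin m ⊕ Fin n → ℝ → ℝ),
        EndStates lm lp ∧ IsTravelingWave f D α lm lp φ ∧
        (∀ h, spd f lm lp h ≠ 0) ∧
        ∀ (t : ℝ) (i : Fin m) (j : Fin n),
          φ (Sum.inr j) (spd f lm lp (Sum.inr j) * t)
            = φ (Sum.inl i) (spd f lm lp (Sum.inl i) * t)) ↔
    (∀ (i : Fin m) (j : Fin n),
        (v (Sum.inl i) / v (Sum.inr j)) ^ 2 = δ (Sum.inl i) / δ (Sum.inr j) ∧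
        (∑ i' : Fin m, α i' j * (v (Sum.inl i') / v (Sum.inr j))) = 1) := by
  have hsq (i : Fin m) (j : Fin n) :
      (v (.inl i) / v (.inr j)) ^ 2 = δ (.inl i) / δ (.inr j) ↔
        v (.inl i) ^ 2 / δ (.inl i) = v (.inr j) ^ 2 / δ (.inr j) :=
    sq_div_eq_div_iff (hv _).ne' (hδ _).ne' (hδ _).ne'
  have hsum (j : Fin n) :
      ∑ i, α i j * (v (.inl i) / v (.inr j)) = 1 ↔ ∑ i, α i j * v (.inl i) = v (.inr j) :=
    sum_mul_div_eq_one_iff _ _ _ (hv _).ne'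
  constructor
  · rintro ⟨lm, lp, φ, hE, hTW, hc, hcont⟩ i j
    obtain ⟨hratio, hflux⟩ :=
      proportional_conditions_of_travelingWave hf₀ hD₀ hv hδ hf hD hE hTW hc hcont i j
    exact ⟨(hsq i j).2 hratio, (hsum j).2 hflux⟩
  · intro hcond
    exact exists_travelingWave_of_proportional hf₀ hD₀ hv hδ hf hD
      (fun i j => (hsq i j).1 (hcond i j).1) fun j => (hsum j).1 (hcond ⟨0, hm⟩ j).2

/-- Proportional fluxes and diffusivities: existence of a completely non-stationary traveling
wave satisfying the continuity condition iff `(v_i/v_j)² = δ_i/δ_j` and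
`∑_i α_{i,j} v_i/v_j = 1`. -/
theorem stmt16 (m n : ℕ) (hm : 0 < m) (hn : 0 < n)
    (f₀ D₀ : ℝ → ℝ) (hf₀ : FluxAssumption f₀) (hD₀ : DiffAssumption D₀)
    (v δ : Fin m ⊕ Fin n → ℝ) (hv : ∀ h, 0 < v h) (hδ : ∀ h, 0 < δ h)
    (f D : Fin m ⊕ Fin n → ℝ → ℝ)
    (hf : ∀ h ℓ, f h ℓ = v h * f₀ ℓ) (hD : ∀ h ℓ, D h ℓ = δ h * D₀ ℓ)
    (α : Fin m → Fin n → ℝ)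
    (hα : ∀ i j, α i j ∈ Ioc (0:ℝ) 1) (hα1 : ∀ i, ∑ j, α i j = 1) :
    (∃ (lm lp : Fin m ⊕ Fin n → ℝ) (φ : Fin m ⊕ Fin n → ℝ → ℝ),
        EndStates lm lp ∧ IsTravelingWave f D α lm lp φ ∧
        (∀ h, spd f lm lp h ≠ 0) ∧
        ∀ (t : ℝ) (i : Fin m) (j : Fin n),
          φ (Sum.inr j) (spd f lm lp (Sum.inr j) * t)
            = φ (Sum.inl i) (spd f lm lp (Sum.inl i) * t)) ↔
    (∀ (i : Fin m) (j : Fin n),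
        (v (Sum.inl i) / v (Sum.inr j)) ^ 2 = δ (Sum.inl i) / δ (Sum.inr j) ∧
        (∑ i' : Fin m, α i' j * (v (Sum.inl i') / v (Sum.inr j))) = 1) :=
  stmt16_general m n hm f₀ D₀ hf₀ hD₀ v δ hv hδ f D hf hD α
end

section
/- Let α ∈ (0,1] and v, δ > 0, and set Δ = {αδ, √δ, (αδ²)^{1/3}}. Consider the system of equations in the unknowns (ℓ₁, ℓⱼ) ∈ (0,1)²: (1 − ℓⱼ)/(1 − ℓ₁) = v²/δ and ℓⱼ(1 − ℓⱼ) = α v ℓ₁(1 − ℓ₁). Then the system has a solution if and only if either (v² = δ and αv = 1) or (0 < v < min Δ or v > max Δ). In the first case, the solutions are exactly the pairs with ℓⱼ = ℓ₁ ∈ (0,1). In the second case (where αδ² ≠ v³), the solution is unique and given by ℓ₁ = v(δ − v²)/(αδ² − v³) and ℓⱼ = αδ(δ − v²)/(αδ² − v³), and these two values are distinct. -/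
/-!
Clearing denominators, the second equation minus `ℓⱼ` times the first factors as
`(1 - ℓ₁) v (v ℓⱼ - αδ ℓ₁) = 0`, so the system is equivalent to the linear system
`(1 - ℓⱼ) δ = v² (1 - ℓ₁)`, `v ℓⱼ = αδ ℓ₁`, of determinant `αδ² - v³`. When the determinant
vanishes the system is solvable only for `δ = v²`, `αv = 1`, and then it reduces to `ℓⱼ = ℓ₁`.
Otherwise Cramer's rule gives `ℓ₁ = v b / D`, `1 - ℓ₁ = δ a / D`, `ℓⱼ = αδ b / D`,
`1 - ℓⱼ = v² a / D` with `a = αδ - v`, `b = δ - v²`, `D = αδ² - v³`, so both values lie in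
`(0, 1)` exactly when `a`, `b`, `D` have a common strict sign, i.e. when `v` lies below or
above all three thresholds `αδ`, `√δ`, `(αδ²)^{1/3}`.
-/

open Set

theorem mem_Ioo_iff_of_eq_mul {x c d t s : ℝ} (hc : 0 < c) (hd : 0 < d) (hx : x = c * t)
    (hx' : 1 - x = d * s) : x ∈ Ioo (0 : ℝ) 1 ↔ 0 < t ∧ 0 < s := by
  rw [mem_Ioo, ← sub_pos (a := 1), hx', hx, mul_pos_iff_of_pos_left hc,
    mul_pos_iff_of_pos_left hd]

theorem div_pos_and_div_pos_iff {a b D : ℝ} :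
    0 < a / D ∧ 0 < b / D ↔ (0 < a ∧ 0 < b ∧ 0 < D) ∨ (a < 0 ∧ b < 0 ∧ D < 0) := by
  rcases lt_trichotomy D 0 with hD | rfl | hD
  · simp [div_pos_iff, hD, hD.not_gt]
  · simp
  · simp [div_pos_iff_of_pos_right hD, hD, hD.not_gt]

namespace EndState

def IsSolution (α v δ l1 lj : ℝ) : Prop :=
  l1 ∈ Ioo (0 : ℝ) 1 ∧ lj ∈ Ioo (0 : ℝ) 1 ∧
    (1 - lj) / (1 - l1) = v ^ 2 / δ ∧ lj * (1 - lj) = α * v * (l1 * (1 - l1))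

/-- `αδ - v`, `δ - v²` and the determinant `αδ² - v³` have a common strict sign; as `x / 0 = 0`,
this excludes a vanishing determinant. -/
def Admissible (α v δ : ℝ) : Prop :=
  0 < (α * δ - v) / (α * δ ^ 2 - v ^ 3) ∧ 0 < (δ - v ^ 2) / (α * δ ^ 2 - v ^ 3)

variable {α v δ l1 lj : ℝ}

theorem Admissible.det_ne_zero (h : Admissible α v δ) : α * δ ^ 2 - v ^ 3 ≠ 0 := fun hdet => by
  simp [Admissible, hdet] at h

theorem lt_min_or_max_lt_iff_admissible (hα : 0 < α) (hv : 0 < v) (hδ : 0 < δ) :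
    (v < min (α * δ) (min (Real.sqrt δ) ((α * δ ^ 2) ^ ((1 : ℝ) / 3))) ∨
        max (α * δ) (max (Real.sqrt δ) ((α * δ ^ 2) ^ ((1 : ℝ) / 3))) < v) ↔
      Admissible α v δ := by
  have hA : 0 ≤ α * δ ^ 2 := by positivity
  rw [Admissible, div_pos_and_div_pos_iff, lt_min_iff, lt_min_iff, max_lt_iff, max_lt_iff,
    Real.lt_sqrt hv.le, Real.sqrt_lt' hv, one_div,
    Real.lt_rpow_inv_iff_of_pos hv.le hA three_pos, Real.rpow_inv_lt_iff_of_pos hA hv.le three_pos]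
  norm_cast
  simp only [sub_pos, sub_neg]

theorem equations_iff_linear (hv : v ≠ 0) (hδ : δ ≠ 0) (hl1 : l1 ≠ 1) :
    ((1 - lj) / (1 - l1) = v ^ 2 / δ ∧ lj * (1 - lj) = α * v * (l1 * (1 - l1))) ↔
      ((1 - lj) * δ = v ^ 2 * (1 - l1) ∧ lj * v = α * δ * l1) := by
  have h1 : 1 - l1 ≠ 0 := sub_ne_zero.2 hl1.symm
  rw [div_eq_div_iff h1 hδ]
  refine and_congr_right fun hlin => ⟨fun hquad => ?_, fun hprop => ?_⟩
  · have hfactor : (1 - l1) * v * (lj * v - α * δ * l1) = 0 := by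
      linear_combination δ * hquad - lj * hlin
    simpa [h1, hv, sub_eq_zero] using hfactor
  · apply mul_left_cancel₀ (mul_ne_zero hv hδ)
    linear_combination (1 - lj) * δ * hprop + α * δ * l1 * hlin

theorem linear_iff_of_det_ne_zero (hv : v ≠ 0) (hdet : α * δ ^ 2 - v ^ 3 ≠ 0) :
    ((1 - lj) * δ = v ^ 2 * (1 - l1) ∧ lj * v = α * δ * l1) ↔
      l1 = v * (δ - v ^ 2) / (α * δ ^ 2 - v ^ 3) ∧
        lj = α * δ * (δ - v ^ 2) / (α * δ ^ 2 - v ^ 3) := by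
  rw [eq_div_iff hdet, eq_div_iff hdet]
  constructor
  · rintro ⟨h1, h2⟩
    refine ⟨by linear_combination (-v) * h1 - δ * h2, mul_left_cancel₀ hv ?_⟩
    linear_combination (-α * δ * v) * h1 + (-v ^ 3) * h2
  · rintro ⟨h1, h2⟩
    refine ⟨mul_left_cancel₀ hdet ?_, mul_left_cancel₀ hdet ?_⟩
    · linear_combination (-δ) * h2 + v ^ 2 * h1
    · linear_combination v * h2 - α * δ * h1

theorem isSolution_iff_linear (hv : v ≠ 0) (hδ : δ ≠ 0) :
    IsSolution α v δ l1 lj ↔ l1 ∈ Ioo (0 : ℝ) 1 ∧ lj ∈ Ioo (0 : ℝ) 1 ∧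
      (1 - lj) * δ = v ^ 2 * (1 - l1) ∧ lj * v = α * δ * l1 :=
  and_congr_right fun hl1 => and_congr_right fun _ => equations_iff_linear hv hδ hl1.2.ne

theorem IsSolution.degenerate_of_det_eq_zero (hv : v ≠ 0) (hδ : δ ≠ 0)
    (hdet : α * δ ^ 2 = v ^ 3) (h : IsSolution α v δ l1 lj) : v ^ 2 = δ ∧ α * v = 1 := by
  obtain ⟨-, -, hlin, hprop⟩ := (isSolution_iff_linear hv hδ).1 h
  have hcramer : l1 * (α * δ ^ 2 - v ^ 3) = v * (δ - v ^ 2) := by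
    linear_combination (-v) * hlin - δ * hprop
  have hvδ : v ^ 2 = δ := by
    rw [hdet, sub_self, mul_zero, eq_comm, mul_eq_zero, sub_eq_zero] at hcramer
    exact (hcramer.resolve_left hv).symm
  refine ⟨hvδ, mul_left_cancel₀ (pow_ne_zero 3 hv) ?_⟩
  linear_combination hdet + α * (v ^ 2 + δ) * hvδ

theorem isSolution_iff_of_degenerate (hv : v ≠ 0) (hvδ : v ^ 2 = δ) (hαv : α * v = 1) :
    IsSolution α v δ l1 lj ↔ l1 ∈ Ioo (0 : ℝ) 1 ∧ lj = l1 := by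
  subst hvδ
  have hαδ : α * v ^ 2 = v := by linear_combination v * hαv
  rw [isSolution_iff_linear hv (pow_ne_zero 2 hv), hαδ]
  constructor
  · rintro ⟨hl1, -, -, hprop⟩
    exact ⟨hl1, mul_right_cancel₀ hv (hprop.trans (mul_comm v l1))⟩
  · rintro ⟨hl1, rfl⟩
    exact ⟨hl1, hl1, mul_comm _ _, mul_comm _ _⟩

theorem isSolution_iff_of_det_ne_zero (hα : 0 < α) (hv : 0 < v) (hδ : 0 < δ)
    (hdet : α * δ ^ 2 - v ^ 3 ≠ 0) :
    IsSolution α v δ l1 lj ↔ Admissible α v δ ∧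
      l1 = v * (δ - v ^ 2) / (α * δ ^ 2 - v ^ 3) ∧
        lj = α * δ * (δ - v ^ 2) / (α * δ ^ 2 - v ^ 3) := by
  have one_sub_div_det {c d a b : ℝ} (h : α * δ ^ 2 - v ^ 3 - c * b = d * a) :
      1 - c * b / (α * δ ^ 2 - v ^ 3) = d * (a / (α * δ ^ 2 - v ^ 3)) := by
    rw [← mul_div_assoc, eq_div_iff hdet, sub_mul, div_mul_cancel₀ _ hdet, one_mul, h]
  have hl1 := mem_Ioo_iff_of_eq_mul hv hδ (mul_div_assoc _ _ _)
    (one_sub_div_det (a := α * δ - v) (b := δ - v ^ 2) (by ring))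
  have hlj := mem_Ioo_iff_of_eq_mul (by positivity : 0 < α * δ) (by positivity : 0 < v ^ 2)
    (mul_div_assoc _ _ _) (one_sub_div_det (a := α * δ - v) (b := δ - v ^ 2) (by ring))
  rw [isSolution_iff_linear hv.ne' hδ.ne', linear_iff_of_det_ne_zero hv.ne' hdet, Admissible]
  constructor
  · rintro ⟨hl1_mem, -, rfl, rfl⟩
    exact ⟨(hl1.1 hl1_mem).symm, rfl, rfl⟩
  · rintro ⟨hadm, rfl, rfl⟩
    exact ⟨hl1.2 hadm.symm, hlj.2 hadm.symm, rfl, rfl⟩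

theorem Admissible.solution_fst_ne_snd (h : Admissible α v δ) :
    v * (δ - v ^ 2) / (α * δ ^ 2 - v ^ 3) ≠ α * δ * (δ - v ^ 2) / (α * δ ^ 2 - v ^ 3) := by
  rw [mul_div_assoc, mul_div_assoc]
  intro heq
  rw [Admissible, ← mul_right_cancel₀ h.2.ne' heq, sub_self, zero_div] at h
  exact lt_irrefl 0 h.1

end EndState

/-- End states of degenerate non-stationary traveling waves for quadratic flux and linear
diffusivity: solvability of the algebraic system, and the explicit (unique) solution when
`αδ² ≠ v³`. -/
theorem stmt18 (α v δ : ℝ) (hα : α ∈ Ioc (0:ℝ) 1) (hv : 0 < v) (hδ : 0 < δ)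
    (P : ℝ → ℝ → Prop)
    (hP : ∀ l1 lj : ℝ, P l1 lj ↔
      (l1 ∈ Ioo (0:ℝ) 1 ∧ lj ∈ Ioo (0:ℝ) 1 ∧
        (1 - lj) / (1 - l1) = v ^ 2 / δ ∧
        lj * (1 - lj) = α * v * (l1 * (1 - l1)))) :
    ((∃ l1 lj : ℝ, P l1 lj) ↔
      ((v ^ 2 = δ ∧ α * v = 1) ∨
        (v < min (α * δ) (min (Real.sqrt δ) ((α * δ ^ 2) ^ ((1:ℝ)/3))) ∨
          max (α * δ) (max (Real.sqrt δ) ((α * δ ^ 2) ^ ((1:ℝ)/3))) < v))) ∧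
    ((v ^ 2 = δ ∧ α * v = 1) →
      ∀ l1 lj : ℝ, P l1 lj ↔ (l1 ∈ Ioo (0:ℝ) 1 ∧ lj = l1)) ∧
    ((v < min (α * δ) (min (Real.sqrt δ) ((α * δ ^ 2) ^ ((1:ℝ)/3))) ∨
        max (α * δ) (max (Real.sqrt δ) ((α * δ ^ 2) ^ ((1:ℝ)/3))) < v) →
      α * δ ^ 2 ≠ v ^ 3 ∧
      (∀ l1 lj : ℝ, P l1 lj ↔
        (l1 = v * (δ - v ^ 2) / (α * δ ^ 2 - v ^ 3) ∧
          lj = α * δ * (δ - v ^ 2) / (α * δ ^ 2 - v ^ 3))) ∧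
      v * (δ - v ^ 2) / (α * δ ^ 2 - v ^ 3)
        ≠ α * δ * (δ - v ^ 2) / (α * δ ^ 2 - v ^ 3)) := by
  open EndState in
  obtain ⟨hα0, -⟩ := hα
  obtain rfl : P = IsSolution α v δ := funext₂ fun l1 lj => propext (hP l1 lj)
  rw [lt_min_or_max_lt_iff_admissible hα0 hv hδ]
  refine ⟨⟨?_, ?_⟩, fun ⟨hvδ, hαv⟩ _ _ => isSolution_iff_of_degenerate hv.ne' hvδ hαv,
    fun hadm => ?_⟩
  · rintro ⟨l1, lj, h⟩
    by_cases hdet : α * δ ^ 2 - v ^ 3 = 0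
    · exact Or.inl (h.degenerate_of_det_eq_zero hv.ne' hδ.ne' (sub_eq_zero.1 hdet))
    · exact Or.inr ((isSolution_iff_of_det_ne_zero hα0 hv hδ hdet).1 h).1
  · rintro (⟨hvδ, hαv⟩ | hadm)
    · exact ⟨1 / 2, 1 / 2, (isSolution_iff_of_degenerate hv.ne' hvδ hαv).2 ⟨by norm_num, rfl⟩⟩
    · exact ⟨_, _, (isSolution_iff_of_det_ne_zero hα0 hv hδ hadm.det_ne_zero).2 ⟨hadm, rfl, rfl⟩⟩
  · refine ⟨sub_ne_zero.1 hadm.det_ne_zero, fun l1 lj => ?_, hadm.solution_fst_ne_snd⟩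
    rw [isSolution_iff_of_det_ne_zero hα0 hv hδ hadm.det_ne_zero, and_iff_right hadm]
end

section
/- Let α ∈ (0,1] and v, δ > 0. Consider the system of equations in the unknowns (ℓ₁, ℓⱼ) ∈ (0,1)²: ℓⱼ ln(ℓⱼ) = α v ℓ₁ ln(ℓ₁) and ℓⱼ = α (δ/v) ℓ₁. Then the system has a solution if and only if either (v² = δ and αv = 1) or (0 < v < min{αδ, √δ} or v > max{αδ, √δ}). In the first case, the solutions are exactly the pairs with ℓⱼ = ℓ₁ ∈ (0,1). In the second case, the solution is unique and given by ℓ₁ = (αδ/v)^{δ/(v²−δ)} and ℓⱼ = (αδ/v)^{v²/(v²−δ)}, and these two values are distinct. -/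
open Set Real

/-!
Write `A = αδ/v`. Substituting `lⱼ = A l₁` into the flux balance and dividing by `α l₁ / v`
leaves `δ log A = (v² - δ) log l₁`. If `v² = δ` this forces `A = αv = 1`, and then every
`l₁ ∈ (0,1)` works. Otherwise `l₁ = A ^ (δ/(v² - δ))` and `lⱼ = A l₁ = A ^ (v²/(v² - δ))`, which
lie in `(0,1)` exactly when `log A` and `v² - δ` have opposite signs; these are the two
inequality regimes for `v`, and `A ≠ 1` there makes the two values distinct.
-/

def IsEndStatePair (α v δ l₁ lⱼ : ℝ) : Prop :=
  l₁ ∈ Ioo (0:ℝ) 1 ∧ lⱼ ∈ Ioo (0:ℝ) 1 ∧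
    lⱼ * log lⱼ = α * v * (l₁ * log l₁) ∧ lⱼ = α * (δ / v) * l₁

lemma rpow_mem_Ioo_zero_one_iff {a x : ℝ} (ha : 0 < a) :
    a ^ x ∈ Ioo (0:ℝ) 1 ↔ x * log a < 0 := by
  rw [mem_Ioo, rpow_def_of_pos ha, exp_lt_one_iff, mul_comm]
  exact and_iff_right (exp_pos _)

lemma rpow_div_mem_Ioo_zero_one_iff {a c s : ℝ} (ha : 0 < a) (hc : 0 < c) :
    a ^ (c / s) ∈ Ioo (0:ℝ) 1 ↔ log a * s < 0 := by
  rw [rpow_mem_Ioo_zero_one_iff ha, div_mul_eq_mul_div, mul_div_assoc, ← smul_eq_mul,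
    smul_neg_iff_of_pos_left hc, div_neg_iff, mul_neg_iff]

section

variable {α v δ l₁ lⱼ : ℝ}

lemma log_mul_sub_neg_iff (hα : 0 < α) (hv : 0 < v) (hδ : 0 < δ) :
    log (α * δ / v) * (v ^ 2 - δ) < 0 ↔
      v < min (α * δ) (√δ) ∨ max (α * δ) (√δ) < v := by
  rw [mul_neg_iff, log_pos_iff (by positivity), log_neg_iff (by positivity), one_lt_div hv,
    div_lt_one hv, sub_pos, sub_neg, lt_min_iff, max_lt_iff, lt_sqrt hv.le, sqrt_lt' hv]

lemma mul_log_eq_iff (hα : 0 < α) (hv : 0 < v) (hδ : 0 < δ) (hl₁ : 0 < l₁)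
    (hlⱼ : lⱼ = α * (δ / v) * l₁) :
    lⱼ * log lⱼ = α * v * (l₁ * log l₁) ↔
      δ * log (α * δ / v) = (v ^ 2 - δ) * log l₁ := by
  have hA : 0 < α * δ / v := by positivity
  have key : α * δ / v * l₁ * (log (α * δ / v) + log l₁) - α * v * (l₁ * log l₁) =
      α * l₁ / v * (δ * log (α * δ / v) - (v ^ 2 - δ) * log l₁) := by
    field_simp
    ring
  rw [hlⱼ, ← mul_div_assoc, log_mul hA.ne' hl₁.ne', ← sub_eq_zero, key, mul_eq_zero,
    sub_eq_zero, or_iff_right (by positivity)]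

lemma isEndStatePair_iff_of_sq_eq (hα : 0 < α) (hv : 0 < v) (hδ : 0 < δ) (hs : v ^ 2 = δ) :
    IsEndStatePair α v δ l₁ lⱼ ↔ α * v = 1 ∧ l₁ ∈ Ioo (0:ℝ) 1 ∧ lⱼ = l₁ := by
  have hA : α * (δ / v) = α * v := by rw [← hs]; field_simp
  constructor
  · rintro ⟨hl₁, -, heq, hlⱼ⟩
    rw [mul_log_eq_iff hα hv hδ hl₁.1 hlⱼ, hs, sub_self, zero_mul, mul_eq_zero,
      or_iff_right hδ.ne', mul_div_assoc, hA] at heq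
    have hαv : α * v = 1 := eq_one_of_pos_of_log_eq_zero (by positivity) heq
    exact ⟨hαv, hl₁, by rw [hlⱼ, hA, hαv, one_mul]⟩
  · rintro ⟨hαv, hl₁, rfl⟩
    exact ⟨hl₁, hl₁, by rw [hαv, one_mul], by rw [hA, hαv, one_mul]⟩

lemma rpow_sq_div_sub_eq (hA : 0 < α * δ / v) (hs : v ^ 2 - δ ≠ 0) :
    (α * δ / v) ^ (v ^ 2 / (v ^ 2 - δ)) = α * (δ / v) * (α * δ / v) ^ (δ / (v ^ 2 - δ)) := by
  rw [show v ^ 2 / (v ^ 2 - δ) = δ / (v ^ 2 - δ) + 1 by field_simp; ring,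
    rpow_add_one hA.ne', mul_comm, mul_div_assoc]

lemma isEndStatePair_iff_of_sq_ne (hα : 0 < α) (hv : 0 < v) (hδ : 0 < δ) (hs : v ^ 2 - δ ≠ 0) :
    IsEndStatePair α v δ l₁ lⱼ ↔ log (α * δ / v) * (v ^ 2 - δ) < 0 ∧
      l₁ = (α * δ / v) ^ (δ / (v ^ 2 - δ)) ∧ lⱼ = (α * δ / v) ^ (v ^ 2 / (v ^ 2 - δ)) := by
  have hA : 0 < α * δ / v := by positivity
  have hpow := rpow_sq_div_sub_eq hA hs
  constructor
  · rintro ⟨hl₁, -, heq, hlⱼ⟩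
    rw [mul_log_eq_iff hα hv hδ hl₁.1 hlⱼ] at heq
    have hl₁eq : l₁ = (α * δ / v) ^ (δ / (v ^ 2 - δ)) := by
      rw [rpow_def_of_pos hA, ← exp_log hl₁.1]
      congr 1
      field_simp
      linarith
    refine ⟨(rpow_div_mem_Ioo_zero_one_iff hA hδ).1 (hl₁eq ▸ hl₁), hl₁eq, ?_⟩
    rw [hlⱼ, hpow, hl₁eq]
  · rintro ⟨hsign, rfl, rfl⟩
    refine ⟨(rpow_div_mem_Ioo_zero_one_iff hA hδ).2 hsign,
      (rpow_div_mem_Ioo_zero_one_iff hA (by positivity)).2 hsign, ?_, hpow⟩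
    rw [mul_log_eq_iff hα hv hδ (rpow_pos_of_pos hA _) hpow, log_rpow hA]
    field_simp

lemma rpow_div_sub_ne (hA : 0 < α * δ / v) (hsign : log (α * δ / v) * (v ^ 2 - δ) < 0) :
    (α * δ / v) ^ (δ / (v ^ 2 - δ)) ≠ (α * δ / v) ^ (v ^ 2 / (v ^ 2 - δ)) := by
  have hs : v ^ 2 - δ ≠ 0 := by rintro h; simp [h] at hsign
  intro h
  rw [rpow_sq_div_sub_eq hA hs, eq_comm, mul_eq_right₀ (rpow_pos_of_pos hA _).ne',
    ← mul_div_assoc] at h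
  simp [h] at hsign

end

/-- End states (with zero lower states) of completely non-stationary traveling waves for the
logarithmic flux with constant diffusivities: solvability of the algebraic system, and the
explicit (unique) solution in the non-proportional case. -/
theorem stmt19 (α v δ : ℝ) (hα : α ∈ Ioc (0:ℝ) 1) (hv : 0 < v) (hδ : 0 < δ)
    (P : ℝ → ℝ → Prop)
    (hP : ∀ l1 lj : ℝ, P l1 lj ↔
      (l1 ∈ Ioo (0:ℝ) 1 ∧ lj ∈ Ioo (0:ℝ) 1 ∧
        lj * Real.log lj = α * v * (l1 * Real.log l1) ∧
        lj = α * (δ / v) * l1)) :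
    ((∃ l1 lj : ℝ, P l1 lj) ↔
      ((v ^ 2 = δ ∧ α * v = 1) ∨
        (v < min (α * δ) (Real.sqrt δ) ∨ max (α * δ) (Real.sqrt δ) < v))) ∧
    ((v ^ 2 = δ ∧ α * v = 1) →
      ∀ l1 lj : ℝ, P l1 lj ↔ (l1 ∈ Ioo (0:ℝ) 1 ∧ lj = l1)) ∧
    ((v < min (α * δ) (Real.sqrt δ) ∨ max (α * δ) (Real.sqrt δ) < v) →
      (∀ l1 lj : ℝ, P l1 lj ↔
        (l1 = (α * δ / v) ^ (δ / (v ^ 2 - δ)) ∧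
          lj = (α * δ / v) ^ (v ^ 2 / (v ^ 2 - δ)))) ∧
      (α * δ / v) ^ (δ / (v ^ 2 - δ)) ≠ (α * δ / v) ^ (v ^ 2 / (v ^ 2 - δ))) := by
  obtain ⟨hα₀, -⟩ := hα
  have hA : 0 < α * δ / v := by positivity
  obtain rfl : P = IsEndStatePair α v δ := funext₂ fun l₁ lⱼ => propext (hP l₁ lⱼ)
  rw [← log_mul_sub_neg_iff hα₀ hv hδ]
  by_cases hs : v ^ 2 = δ
  · simp only [isEndStatePair_iff_of_sq_eq hα₀ hv hδ hs, hs, sub_self, mul_zero, lt_irrefl,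
      true_and, or_false]
    exact ⟨⟨fun ⟨_, _, hαv, _⟩ => hαv, fun hαv => ⟨1 / 2, 1 / 2, hαv, by norm_num, rfl⟩⟩,
      fun hαv _ _ => and_iff_right hαv, False.elim⟩
  · simp only [isEndStatePair_iff_of_sq_ne hα₀ hv hδ (sub_ne_zero.2 hs), hs, false_and,
      false_or]
    exact ⟨⟨fun ⟨_, _, hsign, _⟩ => hsign, fun hsign => ⟨_, _, hsign, rfl, rfl⟩⟩, False.elim,
      fun hsign => ⟨fun _ _ => and_iff_right hsign, rpow_div_sub_ne hA hsign⟩⟩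
end
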